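/- arXiv:math/0306220 — 9 statements merged into one kernel-verified Lean document; each statement's English description precedes it below -/
import Mathlib

section
/- Let f : M → ℂ^P and g : M → ℂ^Q be functions and define R(z,w) = Σ_{p=1}^P f_p(z)·conj(f_p(w)) − Σ_{q=1}^Q g_q(z)·conj(g_q(w)). Then for every k points z_1, …, z_k ∈ M, the determinant of the k×k matrix with (i,j) entry R(z_i, z_j) equals Σ_{m=0}^k (−1)^m Σ_{A,B} |det M_{A,B}(z)|², where the inner sum is over all subsets A ⊆ {1,…,P} with |A| = k−m and B ⊆ {1,…,Q} with |B| = m, and M_{A,B}(z) is the k×k matrix whose columns are the vectors (f_a(z_1), …, f_a(z_k)) for a ∈ A together with the vectors (g_b(z_1), …, g_b(z_k)) for b ∈ B. -/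
open scoped ComplexOrder

/-- Given component functions `f : M → ℂ^P`, `g : M → ℂ^Q`, points `z_1, …, z_k`, and
subsets `A ⊆ {1,…,P}`, `B ⊆ {1,…,Q}` with `|A| + |B| = k`, this is the determinant of
the `k × k` matrix `M_{A,B}(z)` whose columns are the vectors `(f_a(z_1), …, f_a(z_k))`
for `a ∈ A` together with `(g_b(z_1), …, g_b(z_k))` for `b ∈ B` (in some order; the
squared absolute value of the determinant does not depend on the ordering of the
columns).  If `|A| + |B| ≠ k` the value is defined to be `0`. -/
noncomputable def subDet {M : Type*} {P Q k : ℕ} (f : M → Fin P → ℂ) (g : M → Fin Q → ℂ)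
    (z : Fin k → M) (A : Finset (Fin P)) (B : Finset (Fin Q)) : ℂ :=
  if h : Fintype.card (↥A ⊕ ↥B) = k then
    Matrix.det (Matrix.of fun i j =>
      Sum.elim (fun a : ↥A => f (z i) a) (fun b : ↥B => g (z i) b)
        ((Fintype.equivFinOfCardEq h).symm j))
  else 0

/-! Writing `C` for the `k × (P + Q)` matrix whose `i`-th row is `(f(z_i), g(z_i))` and
`D = diag(1, …, 1, -1, …, -1)`, the matrix `(R(z_i, z_j))` is `C D Cᴴ`. By Cauchy–Binet its
determinant is the sum over `k`-element column sets `S` of `det C_S · det (D Cᴴ)_S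
= (∏_{x ∈ S} D_x) |det C_S|²`, and the sign is `(-1)^m` with `m` the number of `g`-columns
in `S`. -/

open Finset Function Matrix

theorem Function.Injective.exists_perm_eq_comp {α β : Type*} {u v : α → β}
    (hu : Injective u) (hv : Injective v) (h : Set.range u = Set.range v) :
    ∃ σ : Equiv.Perm α, u = v ∘ σ :=
  ⟨(Equiv.ofInjective u hu).trans ((Equiv.setCongr h).trans (Equiv.ofInjective v hv).symm),
    funext fun a => by simp [Equiv.apply_ofInjective_symm]⟩

theorem Finset.exists_injective_image_eq_of_card_eq {n : Type*} [DecidableEq n] {k : ℕ}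
    {S : Finset n} (hS : #S = k) : ∃ u : Fin k → n, Injective u ∧ univ.image u = S := by
  subst hS
  refine ⟨(↑) ∘ S.equivFin.symm, Subtype.val_injective.comp S.equivFin.symm.injective, ?_⟩
  rw [← image_image, image_univ_equiv, univ_eq_attach, attach_image_val]

theorem Finset.sum_injective_image_eq_sum_perm {α n M : Type*} [Fintype α] [DecidableEq α]
    [Fintype n] [DecidableEq n] [AddCommMonoid M] {u : α → n} (hu : Injective u)
    (F : (α → n) → M) :
    ∑ p ∈ {p : α → n | Injective p} with univ.image p = univ.image u, F p =
      ∑ τ : Equiv.Perm α, F (u ∘ τ) := by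
  symm
  refine sum_bij (fun τ _ => u ∘ τ) ?_ ?_ ?_ fun _ _ => rfl
  · intro τ _
    simp [hu.comp τ.injective, ← image_image, image_univ_equiv]
  · intro τ _ τ' _ h
    exact Equiv.ext fun a => hu (congrFun h a)
  · intro p hp
    simp only [mem_filter, mem_univ, true_and] at hp
    obtain ⟨σ, hσ⟩ := hp.1.exists_perm_eq_comp hu (by
      simpa using congrArg ((↑) : Finset n → Set n) hp.2)
    exact ⟨σ, mem_univ _, hσ.symm⟩

theorem Finset.prod_elim_one_neg_one {R α β : Type*} [CommMonoid R] [HasDistribNeg R] (S : Finset (α ⊕ β)) :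
    ∏ x ∈ S, Sum.elim (fun _ => (1 : R)) (fun _ => -1) x = (-1) ^ #S.toRight := by
  conv_lhs => rw [← toLeft_disjSum_toRight (u := S)]
  simp [prod_disjSum]

theorem Finset.sum_powersetCard_disjSum {α β M : Type*} [AddCommMonoid M] (s : Finset α)
    (t : Finset β) (k : ℕ) (F : Finset (α ⊕ β) → M) :
    ∑ S ∈ (s.disjSum t).powersetCard k, F S =
      ∑ m ∈ range (k + 1), ∑ A ∈ s.powersetCard (k - m), ∑ B ∈ t.powersetCard m,
        F (A.disjSum B) := by
  simp_rw [← sum_product', sum_sigma']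
  refine sum_nbij' (fun S => ⟨#S.toRight, S.toLeft, S.toRight⟩)
    (fun x => x.2.1.disjSum x.2.2) ?_ ?_ ?_ ?_ fun S _ => by rw [toLeft_disjSum_toRight]
  · intro S h
    simp only [mem_sigma, mem_range, mem_product, mem_powersetCard] at h ⊢
    have := card_toLeft_add_card_toRight (u := S)
    obtain ⟨hl, hr⟩ := subset_disjSum.1 h.1
    exact ⟨by omega, ⟨hl, by omega⟩, hr, trivial⟩
  · rintro ⟨m, A, B⟩ h
    simp only [mem_sigma, mem_range, mem_product, mem_powersetCard] at h ⊢
    refine ⟨disjSum_subset.2 ⟨by simpa using h.2.1.1, by simpa using h.2.2.1⟩, ?_⟩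
    rw [card_disjSum]; omega
  · intro S _
    exact toLeft_disjSum_toRight
  · rintro ⟨m, A, B⟩ h
    simp only [mem_sigma, mem_product, mem_powersetCard] at h
    simp [← h.2.2.2]

section CauchyBinet

variable {R : Type*} [CommRing R]

theorem Matrix.det_mul_eq_sum_injective {m n : Type*} [Fintype m] [DecidableEq m] [Fintype n]
    [DecidableEq n] (A : Matrix m n R) (B : Matrix n m R) :
    (A * B).det =
      ∑ p : m → n with Injective p, (∏ i, B (p i) i) * (A.submatrix id p).det := by
  have hall : (A * B).det = ∑ p : m → n, (∏ i, B (p i) i) * (A.submatrix id p).det := by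
    simp only [det_apply', mul_apply, prod_univ_sum, mul_sum, Fintype.piFinset_univ,
      submatrix_apply, id]
    rw [sum_comm]
    refine sum_congr rfl fun p _ => sum_congr rfl fun σ _ => ?_
    rw [prod_mul_distrib]
    ring
  rw [hall, sum_filter_of_ne]
  intro p _ hp
  contrapose! hp
  obtain ⟨i, j, hij, hne⟩ := not_injective_iff.1 hp
  rw [det_zero_of_column_eq hne fun x => by simp [hij], mul_zero]

/-- Cauchy–Binet. The summand `c S` is prescribed through every enumeration `u` of `S`,
which avoids choosing one. -/
theorem Matrix.det_mul_eq_sum_powersetCard {n : Type*} [Fintype n] [DecidableEq n] {k : ℕ}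
    (A : Matrix (Fin k) n R) (B : Matrix n (Fin k) R) (c : Finset n → R)
    (hc : ∀ u : Fin k → n, Injective u →
      c (univ.image u) = (A.submatrix id u).det * (B.submatrix u id).det) :
    (A * B).det = ∑ S ∈ univ.powersetCard k, c S := by
  rw [det_mul_eq_sum_injective, ← sum_fiberwise_of_maps_to (t := univ.powersetCard k)
    (g := fun p => univ.image p) fun p hp => by
      simp [card_image_of_injective _ (mem_filter.1 hp).2]]
  refine sum_congr rfl fun S hS => ?_
  obtain ⟨u, hu, rfl⟩ := exists_injective_image_eq_of_card_eq (mem_powersetCard_univ.1 hS)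
  rw [sum_injective_image_eq_sum_perm hu, hc u hu, det_apply' (B.submatrix u id), mul_sum]
  refine sum_congr rfl fun τ _ => ?_
  rw [show A.submatrix id (u ∘ τ) = (A.submatrix id u).submatrix id τ from rfl, det_permute']
  simp only [submatrix_apply, id, comp_def]
  ring

theorem Matrix.det_submatrix_diagonal_mul_conjTranspose [StarRing R] {m n : Type*} [Fintype m]
    [DecidableEq m] [Fintype n] [DecidableEq n] (A : Matrix m n R) (d : n → R) (u : m → n) :
    ((diagonal d * Aᴴ).submatrix u id).det = (∏ i, d (u i)) * star (A.submatrix id u).det := by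
  have h : (diagonal d * Aᴴ).submatrix u id = diagonal (d ∘ u) * (A.submatrix id u)ᴴ := by
    ext i j
    simp [diagonal_mul]
  rw [h, det_mul, det_diagonal, det_conjTranspose]
  rfl

end CauchyBinet

theorem Matrix.normSq_det_submatrix_of_range_eq {m n : Type*} [Fintype m] [DecidableEq m]
    (A : Matrix m n ℂ) {u v : m → n} (hu : Injective u) (hv : Injective v)
    (h : Set.range u = Set.range v) :
    Complex.normSq (A.submatrix id u).det = Complex.normSq (A.submatrix id v).det := by
  obtain ⟨σ, rfl⟩ := hu.exists_perm_eq_comp hv h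
  rw [show A.submatrix id (v ∘ σ) = (A.submatrix id v).submatrix id σ from rfl, det_permute',
    Complex.normSq_mul]
  rcases Int.units_eq_one_or (Equiv.Perm.sign σ) with hσ | hσ <;> simp [hσ]

section ComponentMatrix

variable {M : Type*} {P Q k : ℕ}

def componentMatrix (f : M → Fin P → ℂ) (g : M → Fin Q → ℂ) (z : Fin k → M) :
    Matrix (Fin k) (Fin P ⊕ Fin Q) ℂ :=
  of fun i => Sum.elim (f (z i)) (g (z i))

theorem subDet_eq_det_submatrix (f : M → Fin P → ℂ) (g : M → Fin Q → ℂ)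
    (z : Fin k → M) {A : Finset (Fin P)} {B : Finset (Fin Q)} (hAB : #A + #B = k) :
    ∃ v : Fin k → Fin P ⊕ Fin Q, Injective v ∧ Set.range v = A.disjSum B ∧
      subDet f g z A B = ((componentMatrix f g z).submatrix id v).det := by
  have hcard : Fintype.card (A ⊕ B) = k := by simpa using hAB
  refine ⟨Sum.map (↑) (↑) ∘ (Fintype.equivFinOfCardEq hcard).symm,
    (Subtype.val_injective.sumMap Subtype.val_injective).comp (Equiv.injective _), ?_, ?_⟩
  · rw [Set.range_comp, Equiv.range_eq_univ, Set.image_univ]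
    ext x
    rcases x with a | b <;> simp
  · rw [subDet, dif_pos hcard]
    congr 1
    ext i j
    rcases h : (Fintype.equivFinOfCardEq hcard).symm j with a | b <;> simp [componentMatrix, h]

end ComponentMatrix

theorem stmt3_general {M : Type*} (P Q k : ℕ)
    (f : M → Fin P → ℂ) (g : M → Fin Q → ℂ) (R : M × M → ℂ)
    (hR : ∀ z w : M, R (z, w) =
      ∑ p, f z p * (starRingEnd ℂ) (f w p) - ∑ q, g z q * (starRingEnd ℂ) (g w q))
    (z : Fin k → M) :
    (Matrix.of fun i j => R (z i, z j)).det =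
      ∑ m ∈ Finset.range (k + 1), (-1 : ℂ) ^ m *
        ((∑ A ∈ Finset.univ.powersetCard (k - m), ∑ B ∈ Finset.univ.powersetCard m,
            Complex.normSq (subDet f g z A B) : ℝ) : ℂ) := by
  set C := componentMatrix f g z
  set s : Fin P ⊕ Fin Q → ℂ := Sum.elim (fun _ => 1) (fun _ => -1)
  have hRC : (of fun i j => R (z i, z j)) = C * (diagonal s * Cᴴ) := by
    ext i j
    rw [of_apply, hR, mul_apply, Fintype.sum_sum_type]
    simp [C, s, componentMatrix, diagonal_mul, sub_eq_add_neg]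
  rw [hRC, det_mul_eq_sum_powersetCard C _
      (fun S => (-1) ^ #S.toRight * (Complex.normSq (subDet f g z S.toLeft S.toRight) : ℂ)),
    ← univ_disjSum_univ, sum_powersetCard_disjSum]
  · push_cast
    refine sum_congr rfl fun m _ => ?_
    simp only [mul_sum, toLeft_disjSum, toRight_disjSum]
    exact sum_congr rfl fun A _ => sum_congr rfl fun B hB => by rw [(mem_powersetCard.1 hB).2]
  · intro u hu
    have hcard : #(univ.image u).toLeft + #(univ.image u).toRight = k := by
      rw [card_toLeft_add_card_toRight, card_image_of_injective _ hu, card_univ, Fintype.card_fin]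
    obtain ⟨v, hv, hvS, hdet⟩ := subDet_eq_det_submatrix f g z hcard
    rw [toLeft_disjSum_toRight] at hvS
    rw [det_submatrix_diagonal_mul_conjTranspose, ← prod_image hu.injOn, prod_elim_one_neg_one,
      hdet, normSq_det_submatrix_of_range_eq C hv hu (by simp [hvS]), ← Complex.mul_conj]
    simp only [Complex.star_def]
    ring

/-- Formula (3): with `R(z,w) = Σ_p f_p(z) conj(f_p(w)) − Σ_q g_q(z) conj(g_q(w))`,
`det (R(z_i,z_j)) = Σ_{m=0}^k (−1)^m Σ_{|A| = k−m, |B| = m} |det M_{A,B}(z)|²`. -/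
theorem stmt3 {M : Type*} (P Q k : ℕ) (hk : 1 ≤ k)
    (f : M → Fin P → ℂ) (g : M → Fin Q → ℂ) (R : M × M → ℂ)
    (hR : ∀ z w : M, R (z, w) =
      ∑ p, f z p * (starRingEnd ℂ) (f w p) - ∑ q, g z q * (starRingEnd ℂ) (g w q))
    (z : Fin k → M) :
    (Matrix.of fun i j => R (z i, z j)).det =
      ∑ m ∈ Finset.range (k + 1), (-1 : ℂ) ^ m *
        ((∑ A ∈ Finset.univ.powersetCard (k - m), ∑ B ∈ Finset.univ.powersetCard m,
            Complex.normSq (subDet f g z A B) : ℝ) : ℂ) :=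
  stmt3_general P Q k f g R hR z
end

section
/- Let n, p, q, k be positive integers, and let f_1, …, f_p, g_1, …, g_q : ℂⁿ → ℂ be entire holomorphic functions such that the p+q functions f_1, …, f_p, g_1, …, g_q are linearly independent over ℂ. Define R : ℂⁿ × ℂⁿ → ℂ by R(z,w) = Σ_{i=1}^p f_i(z)·conj(f_i(w)) − Σ_{j=1}^q g_j(z)·conj(g_j(w)). If R ∈ 𝒫_k(ℂⁿ), then p ≥ k+1. -/
/-!
Expanding the form of `R` on `k` points gives, for all points `z_i` and coefficients `a_i`,
`Σ_j |Σ_i a_i g_j(z_i)|² ≤ Σ_l |Σ_i a_i f_l(z_i)|²`. If `p ≤ k`, pick `p` points at which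
the evaluation matrix `A = (f_l(z_i))` is invertible and let one of them, `w`, vary. Taking for
`a` a row of `adj A`, the inequality becomes `|N_r(w)| ≤ |det A(w)|`, where `N = adj A · (g(z_i))_i`
is the Cramer solution of the interpolation problem `Σ_l c_l f_l(z_i) = g(z_i)`. Both sides are
entire in `w`, so by removable singularities and Liouville (along complex lines) `N_r = c_r det A`
for constants `c_r`. Cramer's rule at the varying point then gives `det A · (Σ_l c_l f_l - g) = 0`,
hence `g = Σ_l c_l f_l`, contradicting the linear independence of `f, g`.
-/

open scoped ComplexOrder

/-- `R ∈ 𝒫_N(ℂⁿ)`: for all points `z_1, …, z_N ∈ ℂⁿ` and scalars `a_1, …, a_N ∈ ℂ`,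
the sum `Σ_{i,j} R(z_i, z_j) a_i conj(a_j)` is a nonnegative real number. -/
def InP {M : Type*} (N : ℕ) (R : M × M → ℂ) : Prop :=
  ∀ (z : Fin N → M) (a : Fin N → ℂ),
    0 ≤ ∑ i, ∑ j, R (z i, z j) * a i * (starRingEnd ℂ) (a j)

open ComplexConjugate Filter Function Set Topology
open Matrix hiding comp_apply

theorem InP.mono {M : Type*} {R : M × M → ℂ} {N N' : ℕ} (hR : InP N' R) (h : N ≤ N') :
    InP N R := by
  intro z a
  obtain ⟨d, rfl⟩ := Nat.exists_eq_add_of_le h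
  rcases isEmpty_or_nonempty (Fin N) with hN | ⟨⟨i₀⟩⟩
  · simp
  simpa [Fin.sum_univ_add] using hR (Fin.append z fun _ => z i₀) (Fin.append a 0)

theorem sum_sum_gram_mul_conj {ι κ M : Type*} [Fintype ι] [Fintype κ] (F : κ → M → ℂ)
    (z : ι → M) (a : ι → ℂ) :
    ∑ i, ∑ j, (∑ l, F l (z i) * conj (F l (z j))) * a i * conj (a j) =
      ((∑ l, ‖∑ i, a i * F l (z i)‖ ^ 2 : ℝ) : ℂ) := by
  push_cast
  simp_rw [← Complex.mul_conj', map_sum, Finset.sum_mul_sum, Finset.sum_mul]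
  conv_rhs => rw [Finset.sum_comm]
  refine Finset.sum_congr rfl fun i _ => ?_
  rw [Finset.sum_comm]
  refine Finset.sum_congr rfl fun j _ => Finset.sum_congr rfl fun l _ => ?_
  rw [map_mul]
  ring

theorem InP.sum_norm_sq_le {M : Type*} {N p q : ℕ} {R : M × M → ℂ} (hP : InP N R)
    {f : Fin p → M → ℂ} {g : Fin q → M → ℂ}
    (hR : ∀ z w, R (z, w) = ∑ i, f i z * conj (f i w) - ∑ j, g j z * conj (g j w))
    (z : Fin N → M) (a : Fin N → ℂ) :
    ∑ j, ‖∑ i, a i * g j (z i)‖ ^ 2 ≤ ∑ l, ‖∑ i, a i * f l (z i)‖ ^ 2 := by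
  have h := hP z a
  simp_rw [hR, sub_mul, Finset.sum_sub_distrib, sum_sum_gram_mul_conj, sub_nonneg] at h
  exact_mod_cast h

section Evaluation

variable {ι α K : Type*}

def evalMatrix (f : ι → α → K) (z : ι → α) : Matrix ι ι K :=
  Matrix.of fun i l => f l (z i)

theorem evalMatrix_update [DecidableEq ι] (f : ι → α → K) (z : ι → α) (i₀ : ι) (w : α) :
    evalMatrix f (update z i₀ w) = (evalMatrix f z).updateRow i₀ fun l => f l w := by
  ext i l
  by_cases hi : i = i₀
  · subst hi; simp [evalMatrix]
  · simp [evalMatrix, hi]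

variable [Fintype ι] [DecidableEq ι]

theorem cramer_evalMatrix [CommRing K] (f : ι → α → K) (g : α → K) (z : ι → α) (r : ι) :
    cramer (evalMatrix f z) (g ∘ z) r = (evalMatrix (update f r g) z).det := by
  rw [cramer_apply]
  congr 1
  ext i l
  rcases eq_or_ne l r with rfl | hl
  · simp [evalMatrix]
  · simp [evalMatrix, hl]

theorem span_range_eval_eq_top [Field K] {f : ι → α → K} (hf : LinearIndependent K f) :
    Submodule.span K (Set.range fun x l => f l x) = ⊤ := by
  by_contra hne
  obtain ⟨φ, hφ, hmap⟩ :=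
    Submodule.exists_dual_map_eq_bot_of_lt_top (lt_top_iff_ne_top.mpr hne) inferInstance
  apply hφ
  have hc : (fun l => φ (Pi.single l 1)) = 0 := by
    refine funext <| Fintype.linearIndependent_iff.mp hf _ (funext fun x => ?_)
    have hx : φ (fun l => f l x) = 0 := by
      rw [← Submodule.mem_bot K, ← hmap]
      exact Submodule.mem_map_of_mem (Submodule.subset_span ⟨x, rfl⟩)
    rw [Pi.zero_apply, ← hx, pi_eq_sum_univ' (fun l => f l x), map_sum]
    simp [mul_comm]
  exact (Pi.basisFun K ι).ext fun l => by simpa using congrFun hc l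

theorem exists_det_evalMatrix_ne_zero [Field K] {f : ι → α → K} (hf : LinearIndependent K f) :
    ∃ z : ι → α, (evalMatrix f z).det ≠ 0 := by
  obtain ⟨κ, x, -, hspan, hli⟩ := exists_linearIndependent' K fun x l => f l x
  rw [span_range_eval_eq_top hf] at hspan
  let e : ι ≃ κ := (Pi.basisFun K ι).indexEquiv (Module.Basis.mk hli hspan.ge)
  refine ⟨x ∘ e, ?_⟩
  rw [← isUnit_iff_ne_zero, ← isUnit_iff_isUnit_det, ← linearIndependent_rows_iff_isUnit]
  exact hli.comp e e.injective

theorem norm_cramer_le_norm_det {A : Matrix ι ι ℂ} {b : ι → ℂ}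
    (h : ∀ a, ‖a ⬝ᵥ b‖ ^ 2 ≤ ∑ l, ‖(a ᵥ* A) l‖ ^ 2) (r : ι) :
    ‖cramer A b r‖ ≤ ‖A.det‖ := by
  have key := h (A.adjugate r)
  have hrow : A.adjugate r ᵥ* A = Pi.single r A.det := by
    ext l
    change (A.adjugate * A) r l = _
    simp [adjugate_mul, Pi.single_apply, one_apply, eq_comm]
  have hcramer : A.adjugate r ⬝ᵥ b = cramer A b r := by
    rw [cramer_eq_adjugate_mulVec]; rfl
  rw [hrow, hcramer, Fintype.sum_eq_single r fun l hl => by simp [hl], Pi.single_eq_same] at key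
  exact (pow_le_pow_iff_left₀ (norm_nonneg _) (norm_nonneg _) two_ne_zero).mp key

end Evaluation

section Holomorphic

theorem Complex.exists_differentiable_eq_div_of_norm_le {φ ψ : ℂ → ℂ}
    (hφ : Differentiable ℂ φ) (hψ : Differentiable ℂ ψ) (hle : ∀ t, ‖φ t‖ ≤ ‖ψ t‖)
    (hne : ∀ z, ∀ᶠ s in 𝓝[≠] z, ψ s ≠ 0) :
    ∃ U : ℂ → ℂ, Differentiable ℂ U ∧ (∀ s, ‖U s‖ ≤ 1) ∧ ∀ s, ψ s ≠ 0 → U s = φ s / ψ s := by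
  -- `φ / ψ` is bounded by `1`, also at the zeros of `ψ` where it takes the junk value `0`.
  set u : ℂ → ℂ := fun s => φ s / ψ s
  have hu_le : ∀ s, ‖u s‖ ≤ 1 := fun s => by
    rw [norm_div]; exact div_le_one_of_le₀ (hle s) (norm_nonneg _)
  have hu_diff : ∀ s, ψ s ≠ 0 → DifferentiableAt ℂ u s := fun s hs => (hφ s).div (hψ s) hs
  set U : ℂ → ℂ := fun s => limUnder (𝓝[≠] s) u
  have hU_eq : ∀ s, ψ s ≠ 0 → U s = u s := fun s hs =>
    ((hu_diff s hs).continuousAt.tendsto.mono_left nhdsWithin_le_nhds).limUnder_eq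
  have hU_diff : Differentiable ℂ U := by
    intro z
    have hnhd : {s | s ≠ z → ψ s ≠ 0} ∈ 𝓝 z := eventually_nhdsWithin_iff.mp (hne z)
    have hupd := Complex.differentiableOn_update_limUnder_of_bddAbove hnhd
      (fun s hs => (hu_diff s (hs.1 hs.2)).differentiableWithinAt)
      ⟨1, by rintro _ ⟨s, -, rfl⟩; exact hu_le s⟩
    refine (hupd.differentiableAt hnhd).congr_of_eventuallyEq ?_
    filter_upwards [hnhd] with s hs
    rcases eq_or_ne s z with rfl | hsz
    · simp [U]
    · rw [update_of_ne hsz, hU_eq s (hs hsz)]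
  refine ⟨U, hU_diff, fun s => ?_, hU_eq⟩
  refine le_of_tendsto
    ((hU_diff s).continuousAt.tendsto.mono_left (nhdsWithin_le_nhds (s := {s}ᶜ))).norm ?_
  filter_upwards [hne s] with t ht
  rw [hU_eq t ht]
  exact hu_le t

theorem Complex.exists_eq_const_mul_of_norm_le {φ ψ : ℂ → ℂ} (hφ : Differentiable ℂ φ)
    (hψ : Differentiable ℂ ψ) (hle : ∀ t, ‖φ t‖ ≤ ‖ψ t‖) : ∃ c, ∀ t, φ t = c * ψ t := by
  have hφ_zero : ∀ t, ψ t = 0 → φ t = 0 := fun t ht =>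
    norm_le_zero_iff.mp ((hle t).trans_eq (by rw [ht, norm_zero]))
  rcases (Complex.analyticOnNhd_univ_iff_differentiable.mpr hψ
    ).eqOn_zero_or_eventually_ne_zero_of_preconnected isPreconnected_univ with hψ0 | hψne
  · exact ⟨0, fun t => by rw [hφ_zero t (hψ0 (mem_univ t)), zero_mul]⟩
  have hne : ∀ z, ∀ᶠ s in 𝓝[≠] z, ψ s ≠ 0 := fun z => by
    filter_upwards [mem_codiscreteWithin_iff_forall_mem_nhdsNE.mp hψne z (mem_univ z)] with s hs
    simpa using hs
  obtain ⟨U, hU_diff, hU_le, hU_eq⟩ :=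
    Complex.exists_differentiable_eq_div_of_norm_le hφ hψ hle hne
  refine ⟨U 0, fun t => ?_⟩
  by_cases ht : ψ t = 0
  · rw [hφ_zero t ht, ht, mul_zero]
  · have hconst : U t = U 0 := hU_diff.apply_eq_apply_of_bounded
      (isBounded_iff_forall_norm_le.mpr ⟨1, by rintro _ ⟨s, rfl⟩; exact hU_le s⟩) t 0
    rw [← hconst, hU_eq t ht, div_mul_cancel₀ _ ht]

variable {E : Type*} [NormedAddCommGroup E] [NormedSpace ℂ E]

theorem exists_eq_const_mul_of_norm_le {φ ψ : E → ℂ} (hφ : Differentiable ℂ φ)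
    (hψ : Differentiable ℂ ψ) (hle : ∀ w, ‖φ w‖ ≤ ‖ψ w‖) : ∃ c, ∀ w, φ w = c * ψ w := by
  by_cases hψ0 : ∀ w, ψ w = 0
  · exact ⟨0, fun w => by simpa [hψ0 w] using hle w⟩
  obtain ⟨z₀, hz₀⟩ := not_forall.mp hψ0
  refine ⟨φ z₀ / ψ z₀, fun w => ?_⟩
  have hL : Differentiable ℂ (AffineMap.lineMap z₀ w : ℂ → E) :=
    (AffineMap.lineMap z₀ w).differentiable
  obtain ⟨c, hc⟩ :=
    Complex.exists_eq_const_mul_of_norm_le (hφ.comp hL) (hψ.comp hL) fun t => hle _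
  have h₀ := hc 0
  have h₁ := hc 1
  simp only [comp_apply, AffineMap.lineMap_apply_zero, AffineMap.lineMap_apply_one] at h₀ h₁
  rw [h₁, h₀, mul_div_cancel_right₀ _ hz₀]

theorem eq_zero_of_mul_eq_zero_of_ne_zero {h D : E → ℂ} (hh : Differentiable ℂ h)
    (hD : Differentiable ℂ D) (hmul : ∀ w, h w * D w = 0) {z₀ : E} (hz₀ : h z₀ ≠ 0) (w : E) :
    D w = 0 := by
  have hL : Differentiable ℂ (AffineMap.lineMap z₀ w : ℂ → E) :=
    (AffineMap.lineMap z₀ w).differentiable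
  rcases (Complex.analyticOnNhd_univ_iff_differentiable.mpr (hh.comp hL)
    ).eq_zero_or_eq_zero_of_mul_eq_zero (Complex.analyticOnNhd_univ_iff_differentiable.mpr
      (hD.comp hL)) (fun t _ => hmul _) isPreconnected_univ with h0 | h0
  · exact absurd (by simpa using h0 0 (mem_univ _)) hz₀
  · simpa using h0 1 (mem_univ _)

variable {ι : Type*} [Fintype ι] [DecidableEq ι]

theorem differentiable_det_evalMatrix_update {f : ι → E → ℂ} (hf : ∀ l, Differentiable ℂ (f l))
    (z : ι → E) (i₀ : ι) : Differentiable ℂ fun w => (evalMatrix f (update z i₀ w)).det := by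
  -- the determinant is linear in the row `i₀`
  let L : (ι → ℂ) →ₗ[ℂ] ℂ :=
    (detRowAlternating : (ι → ℂ) [⋀^ι]→ₗ[ℂ] ℂ).toMultilinearMap.toLinearMap (evalMatrix f z) i₀
  have hL : (fun w => (evalMatrix f (update z i₀ w)).det) = fun w => L fun l => f l w := by
    funext w
    rw [evalMatrix_update]
    rfl
  rw [hL]
  exact (LinearMap.toContinuousLinearMap L).differentiable.comp (differentiable_pi.mpr hf)

theorem mem_span_of_norm_sq_le [Nonempty ι] {f : ι → E → ℂ} {g : E → ℂ}
    (hf : ∀ l, Differentiable ℂ (f l)) (hg : Differentiable ℂ g) (hind : LinearIndependent ℂ f)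
    (hle : ∀ (z : ι → E) (a : ι → ℂ),
      ‖∑ i, a i * g (z i)‖ ^ 2 ≤ ∑ l, ‖∑ i, a i * f l (z i)‖ ^ 2) :
    g ∈ Submodule.span ℂ (Set.range f) := by
  obtain ⟨W, hW⟩ := exists_det_evalMatrix_ne_zero hind
  obtain ⟨i₀⟩ := ‹Nonempty ι›
  set z : E → ι → E := fun w => update W i₀ w
  set h : E → ℂ := fun w => (evalMatrix f (z w)).det
  set N : ι → E → ℂ := fun r w => cramer (evalMatrix f (z w)) (g ∘ z w) r
  have hh_diff : Differentiable ℂ h := differentiable_det_evalMatrix_update hf W i₀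
  have hN_diff : ∀ r, Differentiable ℂ (N r) := fun r => by
    simp only [N, cramer_evalMatrix]
    refine differentiable_det_evalMatrix_update (fun l => ?_) W i₀
    rcases eq_or_ne l r with rfl | hl
    · simpa using hg
    · simpa [hl] using hf l
  choose c hc using fun r =>
    exists_eq_const_mul_of_norm_le (hN_diff r) hh_diff
      fun w => norm_cramer_le_norm_det (hle (z w)) r
  have hcramer : ∀ w, h w * (∑ l, c l * f l w - g w) = 0 := by
    intro w
    have hsolve : ∑ l, f l w * N l w = h w * g w := by
      simpa [mulVec, dotProduct, evalMatrix, z, N, h] using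
        congrFun (mulVec_cramer (evalMatrix f (z w)) (g ∘ z w)) i₀
    rw [mul_sub, ← hsolve, Finset.mul_sum, ← Finset.sum_sub_distrib]
    exact Finset.sum_eq_zero fun l _ => by rw [hc]; ring
  have hzero := eq_zero_of_mul_eq_zero_of_ne_zero hh_diff
    ((Differentiable.fun_sum fun l _ => (hf l).const_mul (c l)).sub hg) hcramer
    (z₀ := W i₀) (by simpa [h, z] using hW)
  exact (Submodule.mem_span_range_iff_exists_fun ℂ).mpr
    ⟨c, funext fun w => by simpa [sub_eq_zero] using hzero w⟩

end Holomorphic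

theorem stmt5_general (n p q k : ℕ) (hp : 0 < p) (hq : 0 < q)
    (f : Fin p → (Fin n → ℂ) → ℂ) (g : Fin q → (Fin n → ℂ) → ℂ)
    (hf : ∀ i, Differentiable ℂ (f i)) (hg : ∀ j, Differentiable ℂ (g j))
    (hind : LinearIndependent ℂ (Sum.elim f g))
    (R : (Fin n → ℂ) × (Fin n → ℂ) → ℂ)
    (hR : ∀ z w : Fin n → ℂ, R (z, w) =
      ∑ i, f i z * (starRingEnd ℂ) (f i w) - ∑ j, g j z * (starRingEnd ℂ) (g j w))
    (hPk : InP k R) :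
    k + 1 ≤ p := by
  by_contra! hpk
  have : Nonempty (Fin p) := ⟨⟨0, hp⟩⟩
  let j₀ : Fin q := ⟨0, hq⟩
  have hPp : InP p R := hPk.mono (by omega)
  have hspan : g j₀ ∈ Submodule.span ℂ (Set.range f) :=
    mem_span_of_norm_sq_le hf (hg j₀) (hind.comp Sum.inl Sum.inl_injective) fun z a =>
      (Finset.single_le_sum (fun j _ => sq_nonneg ‖∑ i, a i * g j (z i)‖)
        (Finset.mem_univ j₀)).trans (hPp.sum_norm_sq_le hR z a)
  refine hind.notMem_span_image (s := Set.range Sum.inl) (x := Sum.inr j₀) (by simp) ?_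
  rwa [← Set.range_comp]

/-- Theorem 1 (main case): if `R = ‖f‖² − ‖g‖²` with `f_1, …, f_p, g_1, …, g_q`
entire and linearly independent (so `N₊(R) = p` and `N₋(R) = q ≥ 1`), and
`R ∈ 𝒫_k(ℂⁿ)`, then `p ≥ k + 1`. -/
theorem stmt5 (n p q k : ℕ) (hn : 0 < n) (hp : 0 < p) (hq : 0 < q) (hk : 0 < k)
    (f : Fin p → (Fin n → ℂ) → ℂ) (g : Fin q → (Fin n → ℂ) → ℂ)
    (hf : ∀ i, Differentiable ℂ (f i)) (hg : ∀ j, Differentiable ℂ (g j))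
    (hind : LinearIndependent ℂ (Sum.elim f g))
    (R : (Fin n → ℂ) × (Fin n → ℂ) → ℂ)
    (hR : ∀ z w : Fin n → ℂ, R (z, w) =
      ∑ i, f i z * (starRingEnd ℂ) (f i w) - ∑ j, g j z * (starRingEnd ℂ) (g j w))
    (hPk : InP k R) :
    k + 1 ≤ p :=
  stmt5_general n p q k hp hq f g hf hg hind R hR hPk
end

section
/- Let n, p, q, k be positive integers with p ≤ k, and let f_1, …, f_p, g_1, …, g_q : ℂⁿ → ℂ be entire holomorphic functions. Define R : ℂⁿ × ℂⁿ → ℂ by R(z,w) = Σ_{i=1}^p f_i(z)·conj(f_i(w)) − Σ_{j=1}^q g_j(z)·conj(g_j(w)). If R ∈ 𝒫_k(ℂⁿ), then R ∈ 𝒫_N(ℂⁿ) for every positive integer N. -/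
/-!
With `F = (f_l)` and `G = (g_m)`, the quadratic form of `R` at points `z_i` with weights `a_i` is
`‖∑ aᵢ F(zᵢ)‖² - ‖∑ aᵢ G(zᵢ)‖²`, so `R ∈ 𝒫_k` says that `G`-combinations of `k` points are
dominated by the corresponding `F`-combinations.

The heart of the proof is that, when `p ≤ k`, domination on `k` points forces every linear
relation `∑ aᵢ F(zᵢ) = 0` to hold for `G` as well. This goes by induction on `p`: if
`f_{l₀}(w) ≠ 0`, subtracting `(f_{l₀} / f_{l₀}(w)) • (value at w)` from every component kills
`f_{l₀}` and costs one of the `k` points (it is spent on `w`). What remains at `k = p = 1` is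
`|g| ≤ |f|` for entire `f, g`; on every complex line `g / f` then has removable singularities
and is bounded, hence constant by Liouville, so `g` is a multiple of `f`.

Given this, any combination `∑ aᵢ F(zᵢ)` of `N` points is already a combination `∑ cⱼ F(wⱼ)` of at
most `p ≤ k` points, `G` takes the same value on both, and the `k`-point inequality applies.
-/

open scoped ComplexOrder

open Complex ComplexConjugate Filter Topology Set

theorem exists_fin_le_finrank_sum_smul_eq {K V X : Type*} [Field K] [AddCommGroup V] [Module K V]
    [FiniteDimensional K V] (F : X → V) {N : ℕ} (z : Fin N → X) (a : Fin N → K) :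
    ∃ D ≤ Module.finrank K V, ∃ (w : Fin D → X) (c : Fin D → K),
      ∑ j, c j • F (w j) = ∑ i, a i • F (z i) := by
  obtain ⟨κ, b, -, hspan, hli⟩ := exists_linearIndependent' K F
  have : Fintype κ := have := hli.finite; Fintype.ofFinite κ
  have hmem : ∑ i, a i • F (z i) ∈ Submodule.span K (range (F ∘ b)) :=
    hspan ▸ Submodule.sum_mem _ fun i _ =>
      Submodule.smul_mem _ _ (Submodule.subset_span ⟨z i, rfl⟩)
  obtain ⟨c, hc⟩ := (Submodule.mem_span_range_iff_exists_fun K).mp hmem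
  let e := Fintype.equivFin κ
  refine ⟨Fintype.card κ, hli.fintype_card_le_finrank, b ∘ e.symm, c ∘ e.symm, ?_⟩
  rw [← hc]
  exact e.symm.sum_comp fun j => c j • F (b j)

theorem Differentiable.eventually_ne_zero_nhdsNE {f : ℂ → ℂ} (hf : Differentiable ℂ f) {w : ℂ}
    (hw : f w ≠ 0) (c : ℂ) : ∀ᶠ x in 𝓝[≠] c, f x ≠ 0 := by
  by_contra h
  rw [not_eventually] at h
  simp only [ne_eq, not_not] at h
  exact hw <| AnalyticOnNhd.eqOn_zero_of_preconnected_of_frequently_eq_zero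
    (fun x _ => hf.analyticAt x) isPreconnected_univ (mem_univ c) h (mem_univ w)

theorem Differentiable.exists_differentiable_eq_div_of_norm_le {f g : ℂ → ℂ}
    (hf : Differentiable ℂ f) (hg : Differentiable ℂ g) (hle : ∀ x, ‖g x‖ ≤ ‖f x‖) {w : ℂ}
    (hw : f w ≠ 0) : ∃ q : ℂ → ℂ, Differentiable ℂ q ∧ ∀ x, f x ≠ 0 → q x = g x / f x := by
  refine ⟨fun x => if f x = 0 then limUnder (𝓝[≠] x) (g / f) else g x / f x, ?_,
    fun x hx => if_neg hx⟩
  intro c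
  by_cases hc : f c = 0
  · obtain ⟨s, hs, hsf⟩ :=
      (eventually_nhdsWithin_iff.mp (hf.eventually_ne_zero_nhdsNE hw c)).exists_mem
    have hd : DifferentiableOn ℂ (g / f) (s \ {c}) := fun x hx =>
      ((hg x).div (hf x) (hsf x hx.1 hx.2)).differentiableWithinAt
    have hb : BddAbove (Norm.norm ∘ (g / f) '' (s \ {c})) := by
      refine ⟨1, ?_⟩
      rintro _ ⟨x, -, rfl⟩
      simpa [norm_div] using div_le_one_of_le₀ (hle x) (norm_nonneg _)
    refine ((differentiableOn_update_limUnder_of_bddAbove hs hd hb).differentiableAt hs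
      ).congr_of_eventuallyEq ?_
    filter_upwards [hs] with x hx
    rcases eq_or_ne x c with rfl | hxc
    · simp [hc]
    · simp [Function.update_of_ne hxc, hsf x hx hxc]
  · refine ((hg c).div (hf c) hc).congr_of_eventuallyEq ?_
    filter_upwards [(isOpen_ne.preimage hf.continuous).mem_nhds hc] with x hx
    exact if_neg hx

theorem Differentiable.exists_eq_const_mul_of_norm_le_of_ne_zero {f g : ℂ → ℂ}
    (hf : Differentiable ℂ f) (hg : Differentiable ℂ g) (hle : ∀ x, ‖g x‖ ≤ ‖f x‖) {w : ℂ}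
    (hw : f w ≠ 0) : ∃ c, ∀ x, g x = c * f x := by
  obtain ⟨q, hq, hqfg⟩ := hf.exists_differentiable_eq_div_of_norm_le hg hle hw
  have hdense : Dense {x | f x ≠ 0} := fun x => by
    by_cases hx : f x = 0
    · exact mem_closure_iff_frequently.mpr
        ((hf.eventually_ne_zero_nhdsNE hw x).frequently.filter_mono nhdsWithin_le_nhds)
    · exact subset_closure hx
  have hbdd : ∀ x, ‖q x‖ ≤ 1 := fun x =>
    closure_minimal (fun y (hy : f y ≠ 0) => by
        simpa [hqfg y hy, norm_div] using div_le_one_of_le₀ (hle y) (norm_nonneg _))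
      (isClosed_le (continuous_norm.comp hq.continuous) continuous_const) (hdense x)
  have hconst : ∀ x, q x = q w := fun x => hq.apply_eq_apply_of_bounded
    (isBounded_iff_forall_norm_le.mpr ⟨1, by rintro _ ⟨y, rfl⟩; exact hbdd y⟩) x w
  refine ⟨q w, fun x => ?_⟩
  by_cases hx : f x = 0
  · have := hle x
    rw [hx, norm_zero, norm_le_zero_iff] at this
    simp [this, hx]
  · rw [← hconst x, hqfg x hx, div_mul_cancel₀ _ hx]

theorem Differentiable.exists_eq_const_mul_of_norm_le {E : Type*} [NormedAddCommGroup E]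
    [NormedSpace ℂ E] {f g : E → ℂ} (hf : Differentiable ℂ f) (hg : Differentiable ℂ g)
    (hle : ∀ x, ‖g x‖ ≤ ‖f x‖) : ∃ c, ∀ x, g x = c * f x := by
  by_cases hf0 : ∀ x, f x = 0
  · exact ⟨0, fun x => by simpa [hf0 x] using hle x⟩
  obtain ⟨w, hw⟩ : ∃ w, f w ≠ 0 := by simpa using hf0
  refine ⟨g w / f w, fun x => ?_⟩
  have hline : Differentiable ℂ fun t : ℂ => w + t • (x - w) :=
    (differentiable_id.smul_const _).const_add _
  obtain ⟨c, hc⟩ := (hf.comp hline).exists_eq_const_mul_of_norm_le_of_ne_zero (hg.comp hline)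
    (fun t => hle _) (w := 0) (by simpa using hw)
  have h0 := hc 0
  have h1 := hc 1
  simp only [Function.comp_apply, zero_smul, add_zero, one_smul, add_sub_cancel] at h0 h1
  rw [h1, h0, mul_div_cancel_right₀ _ hw]

section Domination

variable {M κ ι : Type*} [Fintype κ] [Fintype ι]

theorem sum_sum_mul_conj_eq_sum_normSq {N : ℕ} (h : κ → M → ℂ) (z : Fin N → M)
    (a : Fin N → ℂ) :
    ∑ i, ∑ j, (∑ l, h l (z i) * conj (h l (z j))) * a i * conj (a j)
      = ((∑ l, normSq (∑ i, a i * h l (z i)) : ℝ) : ℂ) := by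
  push_cast
  simp only [← mul_conj, map_sum, map_mul, Finset.sum_mul, Finset.mul_sum]
  refine (Finset.sum_congr rfl fun i _ => Finset.sum_comm).trans (Finset.sum_comm.trans ?_)
  exact Finset.sum_congr rfl fun _ _ => Finset.sum_comm.trans <| Finset.sum_congr rfl fun _ _ =>
    Finset.sum_congr rfl fun _ _ => by ring

def Dominated (k : ℕ) (f : κ → M → ℂ) (g : ι → M → ℂ) : Prop :=
  ∀ (z : Fin k → M) (a : Fin k → ℂ),
    ∑ m, normSq (∑ i, a i * g m (z i)) ≤ ∑ l, normSq (∑ i, a i * f l (z i))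

theorem inP_iff_dominated {N : ℕ} {f : κ → M → ℂ} {g : ι → M → ℂ} {R : M × M → ℂ}
    (hR : ∀ z w, R (z, w) = ∑ l, f l z * conj (f l w) - ∑ m, g m z * conj (g m w)) :
    InP N R ↔ Dominated N f g := by
  refine forall₂_congr fun z a => ?_
  simp only [hR, sub_mul, Finset.sum_sub_distrib, sum_sum_mul_conj_eq_sum_normSq, ← ofReal_sub,
    zero_le_real, sub_nonneg]

namespace Dominated

variable {k : ℕ} {f : κ → M → ℂ} {g : ι → M → ℂ}

theorem mono [Nonempty M] (h : Dominated k f g) {m : ℕ} (hmk : m ≤ k) : Dominated m f g := by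
  obtain ⟨d, rfl⟩ := Nat.exists_eq_add_of_le hmk
  intro z a
  have pad : ∀ h : M → ℂ, ∑ i : Fin (m + d),
      Fin.append a 0 i * h (Fin.append z (fun _ => Classical.ofNonempty) i)
      = ∑ i, a i * h (z i) := by
    simp [Fin.sum_univ_add]
  simpa only [pad] using h (Fin.append z fun _ => Classical.ofNonempty) (Fin.append a 0)

theorem normSq_apply_le (h : Dominated k f g) (hk : 0 < k) (x : M) (m : ι) :
    normSq (g m x) ≤ ∑ l, normSq (f l x) := by
  have hx : ∑ m, normSq (g m x) ≤ ∑ l, normSq (f l x) := by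
    simpa [Pi.single_apply] using h (fun _ => x) (Pi.single ⟨0, hk⟩ 1)
  exact (Finset.single_le_sum (fun m _ => normSq_nonneg (g m x)) (Finset.mem_univ m)).trans hx

theorem apply_eq_zero (h : Dominated k f g) (hk : 0 < k) {x : M} (hx : ∀ l, f l x = 0)
    (m : ι) : g m x = 0 :=
  normSq_eq_zero.mp <| le_antisymm (by simpa [hx] using h.normSq_apply_le hk x m) (normSq_nonneg _)

theorem descend {p : ℕ} {f : Fin (p + 1) → M → ℂ} (h : Dominated (k + 1) f g)
    {l₀ : Fin (p + 1)} {w : M} {α : M → ℂ} (hα : ∀ x, f l₀ x = α x * f l₀ w) :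
    Dominated k (fun l x => f (l₀.succAbove l) x - α x * f (l₀.succAbove l) w)
      (fun m x => g m x - α x * g m w) := by
  intro z a
  have hsnoc : ∀ h : M → ℂ, ∑ i, Fin.snoc (α := fun _ => ℂ) a (-∑ i, a i * α (z i)) i *
      h (Fin.snoc (α := fun _ => M) z w i) = ∑ i, a i * (h (z i) - α (z i) * h w) := by
    intro h
    simp only [Fin.sum_univ_castSucc, Fin.snoc_castSucc, Fin.snoc_last, mul_sub,
      Finset.sum_sub_distrib, Finset.sum_mul, neg_mul, ← sub_eq_add_neg, mul_assoc]
  have := h (Fin.snoc z w) (Fin.snoc a (-∑ i, a i * α (z i)))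
  rw [Fin.sum_univ_succAbove _ l₀] at this
  have hl₀ : ∀ x, f l₀ x - α x * f l₀ w = 0 := fun x => sub_eq_zero.mpr (hα x)
  simpa only [hsnoc, hl₀, mul_zero, Finset.sum_const_zero, map_zero, zero_add] using this

end Dominated

end Domination

namespace Dominated

variable {E ι : Type*} [NormedAddCommGroup E] [NormedSpace ℂ E] [Fintype ι]
  {p k : ℕ} {f : Fin p → E → ℂ} {g : ι → E → ℂ}

theorem sum_eq_zero_of_forall_sum_eq_zero (hf : ∀ l, Differentiable ℂ (f l))
    (hg : ∀ m, Differentiable ℂ (g m)) (h : Dominated k f g) (hk : 0 < k) (hpk : p ≤ k)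
    {N : ℕ} (z : Fin N → E) (a : Fin N → ℂ) (hfa : ∀ l, ∑ i, a i * f l (z i) = 0) (m : ι) :
    ∑ i, a i * g m (z i) = 0 := by
  induction p generalizing k g with
  | zero => simp [h.apply_eq_zero hk finZeroElim m]
  | succ p ih =>
    by_cases hf0 : ∀ l x, f l x = 0
    · simp [h.apply_eq_zero hk (hf0 · _) m]
    obtain ⟨l₀, w, hw⟩ : ∃ l₀ w, f l₀ w ≠ 0 := by simpa using hf0
    obtain ⟨k, rfl⟩ : ∃ k', k = k' + 1 := ⟨k - 1, by omega⟩
    rcases Nat.eq_zero_or_pos k with rfl | hk'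
    · obtain rfl : p = 0 := by omega
      obtain ⟨c, hc⟩ := (hf l₀).exists_eq_const_mul_of_norm_le (hg m) fun x => by
        have := h.normSq_apply_le hk x m
        rw [Fin.sum_univ_succAbove _ l₀, Fin.sum_univ_zero, add_zero, normSq_eq_norm_sq,
          normSq_eq_norm_sq] at this
        exact pow_le_pow_iff_left₀ (norm_nonneg _) (norm_nonneg _) two_ne_zero |>.mp this
      simp only [hc, mul_left_comm _ c, ← Finset.mul_sum, hfa l₀, mul_zero]
    · set α : E → ℂ := fun x => f l₀ x * (f l₀ w)⁻¹
      have hα : ∀ x, f l₀ x = α x * f l₀ w := fun x => (inv_mul_cancel_right₀ hw _).symm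
      have hαa : ∑ i, a i * α (z i) = 0 := by
        simp only [α, ← mul_assoc, ← Finset.sum_mul, hfa l₀, zero_mul]
      have hshift : ∀ (h : E → ℂ) (c : ℂ),
          ∑ i, a i * (h (z i) - α (z i) * c) = ∑ i, a i * h (z i) := by
        intro h c
        simp only [mul_sub, Finset.sum_sub_distrib, ← mul_assoc, ← Finset.sum_mul, hαa,
          zero_mul, sub_zero]
      have hαd : Differentiable ℂ α := (hf l₀).mul_const _
      have := ih (f := fun l x => f (l₀.succAbove l) x - α x * f (l₀.succAbove l) w)
        (g := fun m x => g m x - α x * g m w) (fun l => (hf _).sub (hαd.mul_const _))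
        (fun m => (hg m).sub (hαd.mul_const _)) (h.descend hα) hk' (by omega)
        (fun l => by rw [hshift]; exact hfa _)
      rwa [hshift] at this

theorem sum_eq_sum_of_forall_sum_eq_sum (hf : ∀ l, Differentiable ℂ (f l))
    (hg : ∀ m, Differentiable ℂ (g m)) (h : Dominated k f g) (hk : 0 < k) (hpk : p ≤ k)
    {N D : ℕ} (z : Fin N → E) (a : Fin N → ℂ) (w : Fin D → E) (c : Fin D → ℂ)
    (hfac : ∀ l, ∑ i, a i * f l (z i) = ∑ j, c j * f l (w j)) (m : ι) :
    ∑ i, a i * g m (z i) = ∑ j, c j * g m (w j) := by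
  have happend : ∀ h : E → ℂ, ∑ i, Fin.append a (-c) i * h (Fin.append z w i)
      = ∑ i, a i * h (z i) - ∑ j, c j * h (w j) := by
    intro h
    simp [Fin.sum_univ_add, sub_eq_add_neg]
  rw [← sub_eq_zero, ← happend]
  exact h.sum_eq_zero_of_forall_sum_eq_zero hf hg hk hpk _ _
    (fun l => by rw [happend, hfac, sub_self]) m

end Dominated

theorem stmt6_general (n p q k : ℕ) (hk : 0 < k)
    (hpk : p ≤ k)
    (f : Fin p → (Fin n → ℂ) → ℂ) (g : Fin q → (Fin n → ℂ) → ℂ)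
    (hf : ∀ i, Differentiable ℂ (f i)) (hg : ∀ j, Differentiable ℂ (g j))
    (R : (Fin n → ℂ) × (Fin n → ℂ) → ℂ)
    (hR : ∀ z w : Fin n → ℂ, R (z, w) =
      ∑ i, f i z * (starRingEnd ℂ) (f i w) - ∑ j, g j z * (starRingEnd ℂ) (g j w))
    (hPk : InP k R) :
    ∀ N : ℕ, 0 < N → InP N R := by
  have hdom : Dominated k f g := (inP_iff_dominated hR).mp hPk
  intro N _
  refine (inP_iff_dominated hR).mpr fun z a => ?_
  obtain ⟨D, hD, w, c, hwc⟩ := exists_fin_le_finrank_sum_smul_eq (fun x l => f l x) z a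
  rw [Module.finrank_fin_fun] at hD
  have hf_eq : ∀ l, ∑ j, c j * f l (w j) = ∑ i, a i * f l (z i) := fun l => by
    simpa using congrFun hwc l
  have hg_eq : ∀ m, ∑ j, c j * g m (w j) = ∑ i, a i * g m (z i) :=
    hdom.sum_eq_sum_of_forall_sum_eq_sum hf hg hk hpk w c z a hf_eq
  simpa only [hf_eq, hg_eq] using hdom.mono (hD.trans hpk) w c

/-- Corollary 1 (stability): if `R = ‖f‖² − ‖g‖²` with entire components, `p ≤ k`,
and `R ∈ 𝒫_k(ℂⁿ)`, then `R ∈ 𝒫_N(ℂⁿ)` for every positive integer `N`. -/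
theorem stmt6 (n p q k : ℕ) (hn : 0 < n) (hp : 0 < p) (hq : 0 < q) (hk : 0 < k)
    (hpk : p ≤ k)
    (f : Fin p → (Fin n → ℂ) → ℂ) (g : Fin q → (Fin n → ℂ) → ℂ)
    (hf : ∀ i, Differentiable ℂ (f i)) (hg : ∀ j, Differentiable ℂ (g j))
    (R : (Fin n → ℂ) × (Fin n → ℂ) → ℂ)
    (hR : ∀ z w : Fin n → ℂ, R (z, w) =
      ∑ i, f i z * (starRingEnd ℂ) (f i w) - ∑ j, g j z * (starRingEnd ℂ) (g j w))
    (hPk : InP k R) :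
    ∀ N : ℕ, 0 < N → InP N R :=
  stmt6_general n p q k hk hpk f g hf hg R hR hPk
end

section
/- Let n, m, P, Q be positive integers, and let f : ℂⁿ → ℂ^P and g : ℂⁿ → ℂ^Q be maps each of whose components is a homogeneous polynomial of degree m. Define R(z,w) = Σ_{p=1}^P f_p(z)·conj(f_p(w)) − Σ_{q=1}^Q g_q(z)·conj(g_q(w)). Then for every positive integer k, R ∈ 𝒫_k(ℂⁿ) if and only if for all points w_1, …, w_k ∈ ℂⁿ one has ||f(w_1) + ⋯ + f(w_k)||² ≥ ||g(w_1) + ⋯ + g(w_k)||² (Euclidean norms on ℂ^P and ℂ^Q). -/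
open scoped ComplexOrder

lemma eval_smul_homog {σ : Type*} [Fintype σ] {m : ℕ} (φ : MvPolynomial σ ℂ)
    (hφ : φ.IsHomogeneous m) (c : ℂ) (z : σ → ℂ) :
    MvPolynomial.eval (c • z) φ = c ^ m * MvPolynomial.eval z φ := by
  rw [MvPolynomial.eval_eq, MvPolynomial.eval_eq, Finset.mul_sum]
  apply Finset.sum_congr rfl
  intro d hd
  have hdeg := hφ (MvPolynomial.mem_support_iff.mp hd)
  simp only [Pi.smul_apply, smul_eq_mul, mul_pow]
  rw [Finset.prod_mul_distrib]
  have : ∏ i ∈ d.support, c ^ d i = c ^ m := by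
    rw [Finset.prod_pow_eq_pow_sum]
    congr 1
    simpa [Finsupp.weight, Finsupp.linearCombination, Finsupp.sum] using hdeg
  rw [this]; ring

lemma sum_identity {N P : ℕ} (F : Fin N → Fin P → ℂ) (a : Fin N → ℂ) :
    ∑ i, ∑ j, (∑ p, F i p * (starRingEnd ℂ) (F j p)) * a i * (starRingEnd ℂ) (a j)
      = ((∑ p, Complex.normSq (∑ i, a i * F i p) : ℝ) : ℂ) := by
  push_cast
  have h : ∀ p : Fin P, ((Complex.normSq (∑ i, a i * F i p) : ℝ) : ℂ)
      = ∑ i, ∑ j, F i p * (starRingEnd ℂ) (F j p) * a i * (starRingEnd ℂ) (a j) := by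
    intro p
    rw [← Complex.mul_conj, map_sum, Finset.sum_mul_sum]
    apply Finset.sum_congr rfl; intro i _
    apply Finset.sum_congr rfl; intro j _
    simp only [map_mul]; ring
  simp only [h, Finset.sum_mul]
  symm
  rw [Finset.sum_comm]
  apply Finset.sum_congr rfl; intro i _
  rw [Finset.sum_comm]

/-- Proposition 2 / Corollary 3: if every component of `f : ℂⁿ → ℂ^P` and of
`g : ℂⁿ → ℂ^Q` is a homogeneous polynomial of degree `m`, and
`R(z,w) = Σ_p f_p(z) conj(f_p(w)) − Σ_q g_q(z) conj(g_q(w))`, then `R ∈ 𝒫_k(ℂⁿ)`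
iff `‖f(w_1) + ⋯ + f(w_k)‖² ≥ ‖g(w_1) + ⋯ + g(w_k)‖²` (Euclidean norms)
for all points `w_1, …, w_k ∈ ℂⁿ`. -/
theorem stmt9 (n m P Q : ℕ) (hn : 0 < n) (hm : 0 < m) (hP : 0 < P) (hQ : 0 < Q)
    (f : (Fin n → ℂ) → Fin P → ℂ) (g : (Fin n → ℂ) → Fin Q → ℂ)
    (hf : ∀ p : Fin P, ∃ φ : MvPolynomial (Fin n) ℂ,
      φ.IsHomogeneous m ∧ ∀ z, f z p = MvPolynomial.eval z φ)
    (hg : ∀ q : Fin Q, ∃ φ : MvPolynomial (Fin n) ℂ,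
      φ.IsHomogeneous m ∧ ∀ z, g z q = MvPolynomial.eval z φ)
    (R : (Fin n → ℂ) × (Fin n → ℂ) → ℂ)
    (hR : ∀ z w : Fin n → ℂ, R (z, w) =
      ∑ p, f z p * (starRingEnd ℂ) (f w p) - ∑ q, g z q * (starRingEnd ℂ) (g w q))
    (k : ℕ) (hk : 0 < k) :
    InP k R ↔
      ∀ w : Fin k → (Fin n → ℂ),
        ∑ q, Complex.normSq (∑ i, g (w i) q) ≤ ∑ p, Complex.normSq (∑ i, f (w i) p) := by
  -- the key computation
  have key : ∀ (z : Fin k → (Fin n → ℂ)) (a : Fin k → ℂ),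
      ∑ i, ∑ j, R (z i, z j) * a i * (starRingEnd ℂ) (a j)
        = ((∑ p, Complex.normSq (∑ i, a i * f (z i) p) : ℝ) : ℂ)
          - ((∑ q, Complex.normSq (∑ i, a i * g (z i) q) : ℝ) : ℂ) := by
    intro z a
    rw [← sum_identity (fun i p => f (z i) p) a, ← sum_identity (fun i q => g (z i) q) a,
      ← Finset.sum_sub_distrib]
    apply Finset.sum_congr rfl; intro i _
    rw [← Finset.sum_sub_distrib]
    apply Finset.sum_congr rfl; intro j _
    rw [hR]; ring
  constructor
  · intro h w
    have := h w 1
    rw [key, ← Complex.ofReal_sub, Complex.zero_le_real, sub_nonneg] at this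
    simpa only [Pi.one_apply, one_mul] using this
  · intro h z a
    rw [key, sub_nonneg, Complex.real_le_real]
    -- choose m-th roots of the coefficients
    choose lam hlam using fun i => IsAlgClosed.exists_pow_nat_eq (a i) hm
    set w : Fin k → (Fin n → ℂ) := fun i => lam i • z i with hw
    have hfe : ∀ (i : Fin k) (p : Fin P), a i * f (z i) p = f (w i) p := by
      intro i p
      obtain ⟨φ, hφ, hev⟩ := hf p
      rw [hev, hev, hw, eval_smul_homog φ hφ, hlam]
    have hge : ∀ (i : Fin k) (q : Fin Q), a i * g (z i) q = g (w i) q := by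
      intro i q
      obtain ⟨φ, hφ, hev⟩ := hg q
      rw [hev, hev, hw, eval_smul_homog φ hφ, hlam]
    simp only [hfe, hge]
    exact h w
end

section
/- Let n, m, P, Q be positive integers, and let f : ℂⁿ → ℂ^P and g : ℂⁿ → ℂ^Q be maps each of whose components is a homogeneous polynomial of degree m. For λ ∈ ℝ define R_λ(z,w) = Σ_{p=1}^P f_p(z)·conj(f_p(w)) − λ·Σ_{q=1}^Q g_q(z)·conj(g_q(w)). Suppose there exist a positive integer N and points w_1, …, w_N ∈ ℂⁿ such that f(w_1) + ⋯ + f(w_N) = 0 but g(w_1) + ⋯ + g(w_N) ≠ 0. Then for every λ ∈ ℝ, if R_λ ∈ 𝒫_N(ℂⁿ) then R_λ ∈ 𝒫_M(ℂⁿ) for every positive integer M. -/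
open scoped ComplexOrder

lemma key_sq {K ι : Type*} [Fintype K] [Fintype ι] (v : K → ι → ℂ) (a : K → ℂ) :
    ∑ i, ∑ j, (∑ p, v i p * (starRingEnd ℂ) (v j p)) * a i * (starRingEnd ℂ) (a j)
      = ((∑ p, Complex.normSq (∑ i, v i p * a i) : ℝ) : ℂ) := by
  push_cast
  calc ∑ i, ∑ j, (∑ p, v i p * (starRingEnd ℂ) (v j p)) * a i * (starRingEnd ℂ) (a j)
      = ∑ i, ∑ j, ∑ p, (v i p * a i) * (starRingEnd ℂ) (v j p * a j) := by
        refine Finset.sum_congr rfl fun i _ => Finset.sum_congr rfl fun j _ => ?_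
        simp only [Finset.sum_mul, map_mul]
        exact Finset.sum_congr rfl fun p _ => by ring
    _ = ∑ i, ∑ p, ∑ j, (v i p * a i) * (starRingEnd ℂ) (v j p * a j) :=
        Finset.sum_congr rfl fun i _ => Finset.sum_comm
    _ = ∑ p, ∑ i, ∑ j, (v i p * a i) * (starRingEnd ℂ) (v j p * a j) :=
        Finset.sum_comm
    _ = ∑ p, (∑ i, v i p * a i) * (starRingEnd ℂ) (∑ j, v j p * a j) := by
        refine Finset.sum_congr rfl fun p _ => ?_
        rw [map_sum, Finset.sum_mul_sum]
    _ = ∑ p, ((Complex.normSq (∑ i, v i p * a i) : ℝ) : ℂ) := by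
        refine Finset.sum_congr rfl fun p _ => ?_
        rw [Complex.mul_conj]

lemma key_split {n P Q K : ℕ} (lam : ℝ)
    (f : (Fin n → ℂ) → Fin P → ℂ) (g : (Fin n → ℂ) → Fin Q → ℂ)
    (R : ℝ → (Fin n → ℂ) × (Fin n → ℂ) → ℂ)
    (hR : ∀ (lam : ℝ) (z w : Fin n → ℂ), R lam (z, w) =
      ∑ p, f z p * (starRingEnd ℂ) (f w p)
        - (lam : ℂ) * ∑ q, g z q * (starRingEnd ℂ) (g w q))
    (z : Fin K → Fin n → ℂ) (a : Fin K → ℂ) :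
    ∑ i, ∑ j, R lam (z i, z j) * a i * (starRingEnd ℂ) (a j)
      = (((∑ p, Complex.normSq (∑ i, f (z i) p * a i))
          - lam * ∑ q, Complex.normSq (∑ i, g (z i) q * a i) : ℝ) : ℂ) := by
  have : ∑ i, ∑ j, R lam (z i, z j) * a i * (starRingEnd ℂ) (a j)
      = (∑ i, ∑ j, (∑ p, f (z i) p * (starRingEnd ℂ) (f (z j) p)) * a i * (starRingEnd ℂ) (a j))
        - (lam : ℂ) * ∑ i, ∑ j, (∑ q, g (z i) q * (starRingEnd ℂ) (g (z j) q)) * a i * (starRingEnd ℂ) (a j) := by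
    simp only [hR, sub_mul, Finset.sum_sub_distrib, Finset.mul_sum, mul_assoc]
    congr 1
    refine Finset.sum_congr rfl fun i _ => Finset.sum_congr rfl fun j _ => ?_
    rw [← Finset.mul_sum]
    ring
  rw [this, key_sq (fun i p => f (z i) p), key_sq (fun i q => g (z i) q)]
  push_cast
  ring

/-- Corollary 4: for the family `R_λ = ‖f‖² − λ‖g‖²` with homogeneous polynomial
components of degree `m`, if there are `N` points where `Σ^N f` vanishes but
`Σ^N g` does not, then for every `λ`, `R_λ ∈ 𝒫_N` implies `R_λ ∈ 𝒫_M` for all `M`. -/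
theorem stmt10 (n m P Q : ℕ) (hn : 0 < n) (hm : 0 < m) (hP : 0 < P) (hQ : 0 < Q)
    (f : (Fin n → ℂ) → Fin P → ℂ) (g : (Fin n → ℂ) → Fin Q → ℂ)
    (hf : ∀ p : Fin P, ∃ φ : MvPolynomial (Fin n) ℂ,
      φ.IsHomogeneous m ∧ ∀ z, f z p = MvPolynomial.eval z φ)
    (hg : ∀ q : Fin Q, ∃ φ : MvPolynomial (Fin n) ℂ,
      φ.IsHomogeneous m ∧ ∀ z, g z q = MvPolynomial.eval z φ)
    (R : ℝ → (Fin n → ℂ) × (Fin n → ℂ) → ℂ)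
    (hR : ∀ (lam : ℝ) (z w : Fin n → ℂ), R lam (z, w) =
      ∑ p, f z p * (starRingEnd ℂ) (f w p)
        - (lam : ℂ) * ∑ q, g z q * (starRingEnd ℂ) (g w q))
    (N : ℕ) (hN : 0 < N) (w : Fin N → Fin n → ℂ)
    (hfw : (∑ i, f (w i)) = 0) (hgw : (∑ i, g (w i)) ≠ 0) :
    ∀ lam : ℝ, InP N (R lam) → ∀ M : ℕ, 0 < M → InP M (R lam) := by
  intro lam hlam M _ z a
  -- First show lam ≤ 0.
  have hX0 : ∑ p, Complex.normSq (∑ i, f (w i) p * 1) = 0 := by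
    refine Finset.sum_eq_zero fun p _ => ?_
    have : ∑ i, f (w i) p * 1 = (∑ i, f (w i)) p := by
      simp [Finset.sum_apply]
    rw [this, hfw]
    simp
  have hY0 : 0 < ∑ q, Complex.normSq (∑ i, g (w i) q * 1) := by
    obtain ⟨q, hq⟩ : ∃ q, (∑ i, g (w i)) q ≠ 0 := by
      by_contra h
      push_neg at h
      exact hgw (funext h)
    refine Finset.sum_pos' (fun q _ => Complex.normSq_nonneg _) ⟨q, Finset.mem_univ q, ?_⟩
    have : ∑ i, g (w i) q * 1 = (∑ i, g (w i)) q := by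
      simp [Finset.sum_apply]
    rw [this]
    exact Complex.normSq_pos.mpr hq
  have hle := hlam w (fun _ => 1)
  rw [key_split lam f g R hR w (fun _ => 1)] at hle
  rw [Complex.zero_le_real] at hle
  rw [hX0] at hle
  have hlam0 : lam ≤ 0 := by
    nlinarith
  -- Now the main inequality.
  rw [key_split lam f g R hR z a, Complex.zero_le_real]
  have h1 : 0 ≤ ∑ p, Complex.normSq (∑ i, f (z i) p * a i) :=
    Finset.sum_nonneg fun p _ => Complex.normSq_nonneg _
  have h2 : 0 ≤ ∑ q, Complex.normSq (∑ i, g (z i) q * a i) :=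
    Finset.sum_nonneg fun q _ => Complex.normSq_nonneg _
  nlinarith
end

section
/- Let ℋ₁ and ℋ₂ be complex inner product spaces (inner products linear in the first argument, conjugate-linear in the second), let f : M → ℋ₁ and g : M → ℋ₂ be functions with ||f(z)||² ≥ ||g(z)||² for every z ∈ M, and define R(z,w) = ⟨f(z), f(w)⟩ − ⟨g(z), g(w)⟩. Then R ∈ 𝒫_2(M) if and only if for all z, w ∈ M: ||f(z)||²·||g(w)||² + ||f(w)||²·||g(z)||² − 2·Re(⟨f(z), f(w)⟩·⟨g(w), g(z)⟩) + |⟨f(z), f(w)⟩|² + |⟨g(z), g(w)⟩|² ≤ ||f(z)||²·||f(w)||² + ||g(z)||²·||g(w)||². (The first three terms on the left equal ||f(z)⊗g(w) − f(w)⊗g(z)||², the squared norm of the wedge (f∧g)(z,w).) -/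
/-!
`R` is Hermitian with real diagonal `R(z,z) = ‖f z‖² - ‖g z‖² ≥ 0`, so the quadratic form of the
`2 × 2` matrix `(R(zᵢ, zⱼ))` is `P|a|² + Q|b|² + 2 Re(c a b̄)` with `P, Q ≥ 0`. Such a form is
nonnegative iff `|c|² ≤ P Q`: one direction is AM-GM, the other the discriminant of the form
restricted to `a = c̄`, `b ∈ ℝ`. Expanding `|R(z,w)|² ≤ R(z,z) R(w,w)` gives the inequality.
-/

open scoped ComplexOrder

open ComplexConjugate

namespace Complex

lemma normSq_le_mul_of_forall_nonneg {P Q : ℝ} (hP : 0 ≤ P) (hQ : 0 ≤ Q) {c : ℂ}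
    (h : ∀ a b : ℂ, 0 ≤ P * normSq a + Q * normSq b + 2 * (c * a * conj b).re) :
    normSq c ≤ P * Q := by
  have hquad : ∀ s : ℝ, 0 ≤ Q * (s * s) + 2 * normSq c * s + P * normSq c := by
    intro s
    have hs := h (conj c) s
    rw [normSq_conj, normSq_ofReal, mul_conj, conj_ofReal, ← ofReal_mul, ofReal_re] at hs
    linarith
  have hdisc := discrim_le_zero hquad
  rw [discrim] at hdisc
  rcases (normSq_nonneg c).eq_or_lt with h0 | h0
  · rw [← h0]; exact mul_nonneg hP hQ
  · nlinarith

lemma forall_nonneg_of_normSq_le_mul {P Q : ℝ} (hP : 0 ≤ P) (hQ : 0 ≤ Q) {c : ℂ}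
    (h : normSq c ≤ P * Q) (a b : ℂ) :
    0 ≤ P * normSq a + Q * normSq b + 2 * (c * a * conj b).re := by
  have hc : ‖c‖ ≤ √P * √Q := by
    rw [← Real.sqrt_mul hP, Real.le_sqrt (norm_nonneg c) (mul_nonneg hP hQ), Complex.sq_norm]
    exact h
  have hre : -(‖c‖ * ‖a‖ * ‖b‖) ≤ (c * a * conj b).re := by
    simpa using neg_le_of_abs_le (abs_re_le_norm (c * a * conj b))
  have hamgm : 2 * (‖c‖ * ‖a‖ * ‖b‖) ≤ P * normSq a + Q * normSq b :=
    calc 2 * (‖c‖ * ‖a‖ * ‖b‖) ≤ 2 * (√P * ‖a‖) * (√Q * ‖b‖) := by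
          rw [show 2 * (√P * ‖a‖) * (√Q * ‖b‖) = 2 * (√P * √Q * ‖a‖ * ‖b‖) by ring]; gcongr
      _ ≤ (√P * ‖a‖) ^ 2 + (√Q * ‖b‖) ^ 2 := two_mul_le_add_sq _ _
      _ = P * normSq a + Q * normSq b := by
          rw [mul_pow, mul_pow, Real.sq_sqrt hP, Real.sq_sqrt hQ, Complex.sq_norm, Complex.sq_norm]
  linarith

end Complex

open Complex

lemma sum_fin_two_mul_conj_of_hermitian {M : Type*} {R : M × M → ℂ}
    (hR : ∀ z w, R (w, z) = conj (R (z, w))) (z : Fin 2 → M) (a : Fin 2 → ℂ) :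
    ∑ i, ∑ j, R (z i, z j) * a i * conj (a j) =
      (((R (z 0, z 0)).re * normSq (a 0) + (R (z 1, z 1)).re * normSq (a 1)
        + 2 * (R (z 0, z 1) * a 0 * conj (a 1)).re : ℝ) : ℂ) := by
  have hdiag : ∀ z, (R (z, z)).im = 0 := fun z => by
    have := congrArg im (hR z z); rw [conj_im] at this; linarith
  simp only [Fin.sum_univ_two, hR (z 0) (z 1)]
  apply Complex.ext <;>
    simp [normSq_apply, mul_re, mul_im, hdiag] <;> ring

theorem inP_two_iff_normSq_le {M : Type*} {R : M × M → ℂ}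
    (hR : ∀ z w, R (w, z) = conj (R (z, w))) (hdiag : ∀ z, 0 ≤ (R (z, z)).re) :
    InP 2 R ↔ ∀ z w, normSq (R (z, w)) ≤ (R (z, z)).re * (R (w, w)).re := by
  simp only [InP, sum_fin_two_mul_conj_of_hermitian hR, zero_le_real]
  constructor
  · intro h z w
    exact normSq_le_mul_of_forall_nonneg (hdiag z) (hdiag w) fun a b => by
      simpa using h ![z, w] ![a, b]
  · intro h z a
    exact forall_nonneg_of_normSq_le_mul (hdiag _) (hdiag _) (h _ _) _ _

/-- The paper's `⟨f(z), f(w)⟩` is Mathlib's `inner ℂ (f w) (f z)`. -/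
theorem stmt13 {M : Type*} {H₁ H₂ : Type*}
    [NormedAddCommGroup H₁] [InnerProductSpace ℂ H₁]
    [NormedAddCommGroup H₂] [InnerProductSpace ℂ H₂]
    (f : M → H₁) (g : M → H₂)
    (hdiag : ∀ z : M, ‖g z‖ ^ 2 ≤ ‖f z‖ ^ 2)
    (R : M × M → ℂ)
    (hR : ∀ z w : M, R (z, w) =
      (inner ℂ (f w) (f z) : ℂ) - (inner ℂ (g w) (g z) : ℂ)) :
    InP 2 R ↔
      ∀ z w : M,
        ‖f z‖ ^ 2 * ‖g w‖ ^ 2 + ‖f w‖ ^ 2 * ‖g z‖ ^ 2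
            - 2 * ((inner ℂ (f w) (f z) : ℂ) * (inner ℂ (g z) (g w) : ℂ)).re
          + Complex.normSq (inner ℂ (f w) (f z) : ℂ)
          + Complex.normSq (inner ℂ (g w) (g z) : ℂ)
        ≤ ‖f z‖ ^ 2 * ‖f w‖ ^ 2 + ‖g z‖ ^ 2 * ‖g w‖ ^ 2 := by
  have hherm : ∀ z w, R (w, z) = conj (R (z, w)) := fun z w => by
    rw [hR, hR, map_sub, inner_conj_symm, inner_conj_symm]
  have hRdiag : ∀ z, (R (z, z)).re = ‖f z‖ ^ 2 - ‖g z‖ ^ 2 := fun z => by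
    rw [hR, sub_re, inner_self_eq_norm_sq_to_K, inner_self_eq_norm_sq_to_K]; norm_cast
  have hnormSq : ∀ z w, normSq (R (z, w)) = normSq (inner ℂ (f w) (f z))
      + normSq (inner ℂ (g w) (g z)) - 2 * (inner ℂ (f w) (f z) * inner ℂ (g z) (g w)).re :=
    fun z w => by rw [hR, normSq_sub, inner_conj_symm]
  rw [inP_two_iff_normSq_le hherm fun z => by linarith [hRdiag z, hdiag z]]
  refine forall₂_congr fun z w => ?_
  rw [hnormSq, hRdiag, hRdiag]
  constructor <;> intro h <;> linarith
end

section
/- Let m be a positive integer and λ ∈ ℝ, and define R_λ : ℂ² × ℂ² → ℂ by R_λ(z,w) = (z₁·conj(w₁) + z₂·conj(w₂))^{2m} − λ·(z₁·z₂·conj(w₁)·conj(w₂))^m. Then R_λ ∈ 𝒫_2(ℂ²) if and only if λ ≤ 2^{2m−1}. -/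
/-!
Write `c = 2^{2m-1} = 4^m/2` and `f(z) = (z₁z₂)^m`. Then
`R_λ(z,w) = R_c(z,w) + (c - λ) f(z) conj(f(w))`, so for `λ ≤ c` it suffices that `R_c ∈ 𝒫_2`,
i.e. that `|R_c(z,w)|² ≤ R_c(z,z) R_c(w,w)`. With `u = z₁ conj(w₁)`, `v = z₂ conj(w₂)` and
`H(x,y) = ((x+y)²)^m - (4xy)^m/2` we have `R_c(z,w) = ((u+v)²)^m - (4uv)^m/2` and
`R_c(z,z) = H(|z₁|², |z₂|²)`. Splitting `A^m - B^m/2 = A^m/2 + (A - B)(∑ A^i B^{m-1-i})/2`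
with `A - B = (u-v)²` and using the parallelogram law gives `|R_c(z,w)| ≤ H(|u|, |v|)`.
What remains, `H(a₁b₁, a₂b₂)² ≤ H(a₁², a₂²) H(b₁², b₂²)`, is by homogeneity the midpoint
convexity of `τ ↦ log H(e^τ, 1)`, whose derivative `t ∂ₜH(t,1) / H(t,1)` (at `t = e^τ`)
increases with `t` by Bernoulli's inequality.

Conversely, the points `(1,1)` and `(1,-1)` are orthogonal, so with coefficients `1, (-1)^m`
the quadratic form of `R_λ` reduces to `2·4^m - 4λ`.
-/

open scoped ComplexOrder

/-- The perturbed Fubini–Study family: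
`R_λ(z,w) = ⟨z,w⟩^{2m} − λ (z₁ z₂ conj(w₁) conj(w₂))^m` on `ℂ² × ℂ²`. -/
noncomputable def Rlam (m : ℕ) (lam : ℝ) : (ℂ × ℂ) × (ℂ × ℂ) → ℂ :=
  fun p =>
    (p.1.1 * (starRingEnd ℂ) p.2.1 + p.1.2 * (starRingEnd ℂ) p.2.2) ^ (2 * m)
      - (lam : ℂ) * (p.1.1 * p.1.2 * (starRingEnd ℂ) p.2.1 * (starRingEnd ℂ) p.2.2) ^ m

open Finset

theorem two_mul_mul_mul_le_of_sq_le {A C b : ℝ} (hA : 0 ≤ A) (hC : 0 ≤ C) (h : b ^ 2 ≤ A * C)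
    (p q : ℝ) : 2 * b * p * q ≤ A * p ^ 2 + C * q ^ 2 := by
  rcases hA.eq_or_lt with rfl | hA
  · obtain rfl : b = 0 := by nlinarith
    nlinarith
  · have key : 0 ≤ A * (A * p ^ 2 + C * q ^ 2 - 2 * b * p * q) := by
      nlinarith [sq_nonneg (A * p - b * q), mul_nonneg (sub_nonneg.2 h) (sq_nonneg q)]
    nlinarith [(mul_nonneg_iff_of_pos_left hA).1 key]

section Kernel

variable {M : Type*}

theorem InP.add {N : ℕ} {R S : M × M → ℂ} (hR : InP N R) (hS : InP N S) :
    InP N (fun p => R p + S p) := by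
  intro z a
  simpa only [add_mul, sum_add_distrib] using add_nonneg (hR z a) (hS z a)

theorem inP_ofReal_mul_rankOne (N : ℕ) {c : ℝ} (hc : 0 ≤ c) (f : M → ℂ) :
    InP N (fun p => c * (f p.1 * starRingEnd ℂ (f p.2))) := by
  intro z a
  have hsum : ∑ i, ∑ j, c * (f (z i) * starRingEnd ℂ (f (z j))) * a i * starRingEnd ℂ (a j)
      = c * ((∑ i, f (z i) * a i) * starRingEnd ℂ (∑ j, f (z j) * a j)) := by
    rw [map_sum, sum_mul_sum, mul_sum]
    refine sum_congr rfl fun i _ => ?_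
    rw [mul_sum]
    refine sum_congr rfl fun j _ => ?_
    rw [map_mul]
    ring
  rw [hsum, Complex.mul_conj]
  exact mul_nonneg (Complex.zero_le_real.2 hc) (Complex.zero_le_real.2 (Complex.normSq_nonneg _))

theorem inP_two_of_sq_norm_le {R : M × M → ℂ}
    (hconj : ∀ p q, R (q, p) = starRingEnd ℂ (R (p, q))) (hdiag : ∀ p, 0 ≤ (R (p, p)).re)
    (hcs : ∀ p q, ‖R (p, q)‖ ^ 2 ≤ (R (p, p)).re * (R (q, q)).re) : InP 2 R := by
  intro z a
  have hdiag_term : ∀ p c, R (p, p) * c * starRingEnd ℂ c = ((R (p, p)).re * ‖c‖ ^ 2 : ℝ) := by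
    intro p c
    rw [mul_assoc, Complex.mul_conj', Complex.ofReal_mul,
      Complex.conj_eq_iff_re.1 (hconj p p).symm]
    push_cast
    ring
  set w := R (z 0, z 1) * a 0 * starRingEnd ℂ (a 1)
  have hw : R (z 1, z 0) * a 1 * starRingEnd ℂ (a 0) = starRingEnd ℂ w := by
    simp only [w, hconj (z 0) (z 1), map_mul, Complex.conj_conj]
    ring
  have hsum : ∑ i, ∑ j, R (z i, z j) * a i * starRingEnd ℂ (a j)
      = ((R (z 0, z 0)).re * ‖a 0‖ ^ 2 : ℝ) + ((R (z 1, z 1)).re * ‖a 1‖ ^ 2 : ℝ)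
        + (w + starRingEnd ℂ w) := by
    simp only [Fin.sum_univ_two, hw, hdiag_term]
    ring
  rw [hsum, Complex.add_conj, ← Complex.ofReal_add, ← Complex.ofReal_add, Complex.zero_le_real]
  have hre : -w.re ≤ ‖R (z 0, z 1)‖ * ‖a 0‖ * ‖a 1‖ := by
    have hnorm : ‖w‖ = ‖R (z 0, z 1)‖ * ‖a 0‖ * ‖a 1‖ := by
      simp only [w, norm_mul, Complex.norm_conj]
    exact hnorm ▸ (neg_le_abs w.re).trans (Complex.abs_re_le_norm w)
  have hamgm := two_mul_mul_mul_le_of_sq_le (hdiag (z 0)) (hdiag (z 1)) (hcs (z 0) (z 1)) ‖a 0‖ ‖a 1‖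
  linarith

end Kernel

noncomputable def critProfile (m : ℕ) (x y : ℝ) : ℝ := ((x + y) ^ 2) ^ m - (4 * x * y) ^ m / 2

namespace critProfile

theorem comm (m : ℕ) (x y : ℝ) : critProfile m x y = critProfile m y x := by
  simp only [critProfile, add_comm x, mul_right_comm 4 x y]

theorem mul_mul (m : ℕ) (c x y : ℝ) :
    critProfile m (c * x) (c * y) = (c ^ 2) ^ m * critProfile m x y := by
  have h1 : (c * x + c * y) ^ 2 = c ^ 2 * (x + y) ^ 2 := by ring
  have h2 : 4 * (c * x) * (c * y) = c ^ 2 * (4 * x * y) := by ring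
  simp only [critProfile, h1, h2, mul_pow]
  ring

theorem eq_pow_mul_one {y : ℝ} (hy : y ≠ 0) (m : ℕ) (x : ℝ) :
    critProfile m x y = (y ^ 2) ^ m * critProfile m (x / y) 1 := by
  rw [← mul_mul, mul_div_cancel₀ x hy, mul_one]

theorem right_zero {m : ℕ} (hm : 0 < m) (x : ℝ) : critProfile m x 0 = x ^ (2 * m) := by
  simp [critProfile, hm.ne', pow_mul]

theorem sq_add_sq_mul_le (k : ℕ) {x y : ℝ} (hx : 0 ≤ x) (hy : 0 ≤ y) :
    ((x + y) ^ 2) ^ k * (x ^ 2 + y ^ 2) ≤ critProfile (k + 1) x y := by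
  have hamgm : (4 * x * y) ^ k ≤ ((x + y) ^ 2) ^ k :=
    pow_le_pow_left₀ (by positivity) (by nlinarith [sq_nonneg (x - y)]) k
  have hcross := mul_le_mul_of_nonneg_left hamgm (by positivity : 0 ≤ 2 * x * y)
  have hsplit : critProfile (k + 1) x y = ((x + y) ^ 2) ^ k * (x ^ 2 + y ^ 2)
      + (2 * x * y * ((x + y) ^ 2) ^ k - 2 * x * y * (4 * x * y) ^ k) := by
    rw [critProfile]; ring
  linarith

theorem pow_le {m : ℕ} (hm : 0 < m) {x y : ℝ} (hx : 0 ≤ x) (hy : 0 ≤ y) :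
    x ^ (2 * m) ≤ critProfile m x y := by
  obtain ⟨k, rfl⟩ := Nat.exists_eq_add_one_of_ne_zero hm.ne'
  refine le_trans ?_ (sq_add_sq_mul_le k hx hy)
  rw [pow_mul, pow_succ]
  gcongr
  · nlinarith
  · nlinarith

theorem nonneg {m : ℕ} (hm : 0 < m) {x y : ℝ} (hx : 0 ≤ x) (hy : 0 ≤ y) :
    0 ≤ critProfile m x y :=
  (by positivity : 0 ≤ x ^ (2 * m)).trans (pow_le hm hx hy)

theorem one_le {m : ℕ} (hm : 0 < m) {t : ℝ} (ht : 0 ≤ t) : 1 ≤ critProfile m t 1 := by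
  simpa using pow_le hm zero_le_one ht |>.trans_eq (comm m 1 t)

end critProfile

section LogConvexity

-- Throughout, `m = k + 1`: no exponent below needs truncated subtraction.
variable (k : ℕ)

theorem critProfile_succ_one (t : ℝ) :
    critProfile (k + 1) t 1 = (t + 1) ^ (2 * k + 2) - 2 * 4 ^ k * t ^ (k + 1) := by
  rw [critProfile, ← pow_mul]; ring

noncomputable def critDeriv (t : ℝ) : ℝ :=
  (2 * k + 2) * (t + 1) ^ (2 * k + 1) - 2 * 4 ^ k * (k + 1) * t ^ k

theorem hasDerivAt_critProfile_one (t : ℝ) :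
    HasDerivAt (critProfile (k + 1) · 1) (critDeriv k t) t := by
  simp_rw [critProfile_succ_one]
  have h1 := ((hasDerivAt_id' t).add_const 1).fun_pow (2 * k + 2)
  have h2 := (hasDerivAt_pow (k + 1) t).const_mul (2 * 4 ^ k : ℝ)
  refine (h1.sub h2).congr_deriv ?_
  simp only [critDeriv, Nat.add_sub_cancel, show 2 * k + 2 - 1 = 2 * k + 1 by omega]
  push_cast
  ring

theorem hasDerivAt_mul_critDeriv (t : ℝ) :
    HasDerivAt (fun t => t * critDeriv k t)
      ((2 * k + 2) * (t + 1) ^ (2 * k + 1) + (2 * k + 2) * (2 * k + 1) * t * (t + 1) ^ (2 * k)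
        - 2 * 4 ^ k * (k + 1) ^ 2 * t ^ k) t := by
  have e : (fun t => t * critDeriv k t) = fun t : ℝ =>
      (2 * k + 2) * (t * (t + 1) ^ (2 * k + 1)) - 2 * 4 ^ k * (k + 1) * t ^ (k + 1) := by
    funext t; simp only [critDeriv]; ring
  rw [e]
  have h1 := ((hasDerivAt_id' t).fun_mul (((hasDerivAt_id' t).add_const 1).fun_pow (2 * k + 1)))
  have h2 := (hasDerivAt_pow (k + 1) t).const_mul (2 * 4 ^ k * (k + 1) : ℝ)
  refine ((h1.const_mul (2 * k + 2 : ℝ)).sub h2).congr_deriv ?_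
  simp only [Nat.add_sub_cancel, show 2 * k + 1 - 1 = 2 * k by omega]
  push_cast
  ring

theorem four_pow_mul_pow_mul_le {t : ℝ} (ht : 0 ≤ t) :
    4 ^ k * t ^ k * ((k + 1) * (1 - t) ^ 2 + 4 * t) ≤ (t + 1) ^ (2 * k + 2) := by
  have hbern := pow_add_mul_le_add_pow (a := 4 * t) (b := (1 - t) ^ 2) (by positivity) (by positivity)
    (k + 1)
  push_cast [Nat.add_sub_cancel] at hbern
  calc 4 ^ k * t ^ k * ((k + 1) * (1 - t) ^ 2 + 4 * t)
      = (4 * t) ^ (k + 1) + (k + 1) * (4 * t) ^ k * (1 - t) ^ 2 := by ring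
    _ ≤ (4 * t + (1 - t) ^ 2) ^ (k + 1) := hbern
    _ = (t + 1) ^ (2 * k + 2) := by rw [show 2 * k + 2 = 2 * (k + 1) by ring, pow_mul]; ring

noncomputable def critElasticity (t : ℝ) : ℝ := t * critDeriv k t / critProfile (k + 1) t 1

theorem hasDerivAt_critElasticity {t : ℝ} (ht : 0 ≤ t) :
    HasDerivAt (critElasticity k) (2 * (k + 1) * (t + 1) ^ (2 * k)
      * ((t + 1) ^ (2 * k + 2) - 4 ^ k * t ^ k * ((k + 1) * (1 - t) ^ 2 + 2 * t))
      / critProfile (k + 1) t 1 ^ 2) t := by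
  refine ((hasDerivAt_mul_critDeriv k t).div (hasDerivAt_critProfile_one k t)
    (zero_lt_one.trans_le (critProfile.one_le k.succ_pos ht)).ne').congr_deriv ?_
  rw [critProfile_succ_one]
  simp only [critDeriv]
  ring

theorem monotoneOn_critElasticity : MonotoneOn (critElasticity k) (Set.Ioi 0) := by
  refine monotoneOn_of_hasDerivWithinAt_nonneg (convex_Ioi 0)
    (fun t ht => (hasDerivAt_critElasticity k (le_of_lt ht)).continuousAt.continuousWithinAt)
    (fun t ht => (hasDerivAt_critElasticity k (le_of_lt (interior_subset ht))).hasDerivWithinAt)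
    ?_
  rw [interior_Ioi]
  intro t (ht : 0 < t)
  have hbern := four_pow_mul_pow_mul_le k ht.le
  have h2t : 0 ≤ 4 ^ k * t ^ k * (2 * t) := by positivity
  refine div_nonneg (mul_nonneg (by positivity) ?_) (sq_nonneg _)
  nlinarith

theorem convexOn_log_critProfile_exp :
    ConvexOn ℝ Set.univ (fun τ => Real.log (critProfile (k + 1) (Real.exp τ) 1)) := by
  have hderiv : ∀ τ, HasDerivAt (fun τ => Real.log (critProfile (k + 1) (Real.exp τ) 1))
      (critElasticity k (Real.exp τ)) τ := by
    intro τ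
    have hpos := critProfile.one_le k.succ_pos (Real.exp_pos τ).le
    refine (((hasDerivAt_critProfile_one k (Real.exp τ)).comp τ (Real.hasDerivAt_exp τ)).log
      (zero_lt_one.trans_le hpos).ne').congr_deriv ?_
    simp only [critElasticity, Function.comp_apply]
    ring
  refine MonotoneOn.convexOn_of_deriv convex_univ
    (fun τ _ => (hderiv τ).continuousAt.continuousWithinAt)
    (fun τ _ => (hderiv τ).differentiableAt.differentiableWithinAt) ?_
  rw [interior_univ, funext fun τ => (hderiv τ).deriv]
  exact fun x _ y _ hxy =>
    monotoneOn_critElasticity k (Real.exp_pos x) (Real.exp_pos y) (Real.exp_le_exp.2 hxy)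

theorem sq_critProfile_mul_le {s t : ℝ} (hs : 0 < s) (ht : 0 < t) :
    critProfile (k + 1) (s * t) 1 ^ 2
      ≤ critProfile (k + 1) (s ^ 2) 1 * critProfile (k + 1) (t ^ 2) 1 := by
  have hpos : ∀ x : ℝ, 0 ≤ x → 0 < critProfile (k + 1) x 1 := fun x hx =>
    zero_lt_one.trans_le (critProfile.one_le k.succ_pos hx)
  have hmid := (convexOn_log_critProfile_exp k).2 (Set.mem_univ (Real.log (s ^ 2)))
    (Set.mem_univ (Real.log (t ^ 2))) (by norm_num : (0 : ℝ) ≤ 1 / 2)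
    (by norm_num : (0 : ℝ) ≤ 1 / 2) (by norm_num)
  have hlog : 1 / 2 * Real.log (s ^ 2) + 1 / 2 * Real.log (t ^ 2) = Real.log (s * t) := by
    rw [Real.log_pow, Real.log_pow, Real.log_mul hs.ne' ht.ne']
    push_cast
    ring
  simp only [smul_eq_mul, hlog, Real.exp_log (mul_pos hs ht), Real.exp_log (pow_pos hs 2),
    Real.exp_log (pow_pos ht 2)] at hmid
  rw [← Real.log_le_log_iff (pow_pos (hpos _ (by positivity)) 2)
    (mul_pos (hpos _ (by positivity)) (hpos _ (by positivity))), Real.log_pow,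
    Real.log_mul (hpos _ (by positivity)).ne' (hpos _ (by positivity)).ne']
  push_cast
  linarith

end LogConvexity

namespace critProfile

theorem sq_mul_mul_le_of_mul_eq_zero {m : ℕ} (hm : 0 < m) {a₁ a₂ b₁ b₂ : ℝ} (h : a₂ * b₂ = 0) :
    critProfile m (a₁ * b₁) (a₂ * b₂) ^ 2
      ≤ critProfile m (a₁ ^ 2) (a₂ ^ 2) * critProfile m (b₁ ^ 2) (b₂ ^ 2) := by
  have ha := pow_le hm (sq_nonneg a₁) (sq_nonneg a₂)
  have hb := pow_le hm (sq_nonneg b₁) (sq_nonneg b₂)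
  have hsq : critProfile m (a₁ * b₁) 0 ^ 2 = (a₁ ^ 2) ^ (2 * m) * (b₁ ^ 2) ^ (2 * m) := by
    rw [right_zero hm]; ring
  rw [h, hsq]
  rcases mul_eq_zero.1 h with rfl | rfl
  · rw [zero_pow two_ne_zero, right_zero hm]
    exact mul_le_mul_of_nonneg_left hb (by positivity)
  · rw [zero_pow two_ne_zero, right_zero hm]
    exact mul_le_mul_of_nonneg_right ha (by positivity)

theorem sq_mul_mul_le {m : ℕ} (hm : 0 < m) {a₁ a₂ b₁ b₂ : ℝ} (ha₁ : 0 ≤ a₁) (ha₂ : 0 ≤ a₂)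
    (hb₁ : 0 ≤ b₁) (hb₂ : 0 ≤ b₂) :
    critProfile m (a₁ * b₁) (a₂ * b₂) ^ 2
      ≤ critProfile m (a₁ ^ 2) (a₂ ^ 2) * critProfile m (b₁ ^ 2) (b₂ ^ 2) := by
  by_cases h₂ : a₂ * b₂ = 0
  · exact sq_mul_mul_le_of_mul_eq_zero hm h₂
  by_cases h₁ : a₁ * b₁ = 0
  · simpa only [comm m] using sq_mul_mul_le_of_mul_eq_zero hm (a₁ := a₂) (b₁ := b₂) h₁
  obtain ⟨ha₁, hb₁⟩ : 0 < a₁ ∧ 0 < b₁ := by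
    rw [mul_eq_zero, not_or] at h₁; exact ⟨ha₁.lt_of_ne' h₁.1, hb₁.lt_of_ne' h₁.2⟩
  obtain ⟨ha₂, hb₂⟩ : 0 < a₂ ∧ 0 < b₂ := by
    rw [mul_eq_zero, not_or] at h₂; exact ⟨ha₂.lt_of_ne' h₂.1, hb₂.lt_of_ne' h₂.2⟩
  obtain ⟨k, rfl⟩ := Nat.exists_eq_add_one_of_ne_zero hm.ne'
  have key := sq_critProfile_mul_le k (div_pos ha₁ ha₂) (div_pos hb₁ hb₂)
  rw [eq_pow_mul_one (mul_pos ha₂ hb₂).ne', eq_pow_mul_one (pow_pos ha₂ 2).ne',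
    eq_pow_mul_one (pow_pos hb₂ 2).ne', ← div_pow, ← div_pow, mul_div_mul_comm]
  calc (((a₂ * b₂) ^ 2) ^ (k + 1) * critProfile (k + 1) (a₁ / a₂ * (b₁ / b₂)) 1) ^ 2
      = (((a₂ * b₂) ^ 2) ^ (k + 1)) ^ 2 * critProfile (k + 1) (a₁ / a₂ * (b₁ / b₂)) 1 ^ 2 := by
        ring
    _ ≤ (((a₂ * b₂) ^ 2) ^ (k + 1)) ^ 2
          * (critProfile (k + 1) ((a₁ / a₂) ^ 2) 1 * critProfile (k + 1) ((b₁ / b₂) ^ 2) 1) := by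
        gcongr
    _ = _ := by ring

end critProfile

theorem pow_div_two_add_mul_geom_sum_le {a b d V : ℝ} (ha : 0 ≤ a) (hb : 0 ≤ b) (haV : a ≤ V)
    (hbV : b ≤ V) (h : a + d + b ≤ 2 * V) (m : ℕ) :
    a ^ m / 2 + d * (∑ i ∈ range m, a ^ i * b ^ (m - 1 - i)) / 2 ≤ V ^ m - b ^ m / 2 := by
  set S := ∑ i ∈ range m, a ^ i * b ^ (m - 1 - i)
  set T := ∑ i ∈ range m, a ^ i * V ^ (m - 1 - i)
  have hS : S * (a - b) = a ^ m - b ^ m := geom_sum₂_mul a b m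
  have hT : T * (a - V) = a ^ m - V ^ m := geom_sum₂_mul a V m
  have hS0 : 0 ≤ S := by positivity
  have hST : S ≤ T := sum_le_sum fun i _ =>
    mul_le_mul_of_nonneg_left (pow_le_pow_left₀ hb hbV _) (by positivity)
  have h1 : d * S ≤ (2 * V - a - b) * S := mul_le_mul_of_nonneg_right (by linarith) hS0
  have h2 : (V - a) * S ≤ (V - a) * T := mul_le_mul_of_nonneg_left hST (by linarith)
  nlinarith

theorem norm_pow_sub_pow_div_two_le (A B : ℂ) {V : ℝ} (h : ‖A‖ + ‖A - B‖ + ‖B‖ ≤ 2 * V)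
    (m : ℕ) : ‖A ^ m - B ^ m / 2‖ ≤ V ^ m - ‖B‖ ^ m / 2 := by
  have haV : ‖A‖ ≤ V := by linarith [norm_sub_norm_le A B]
  have hbV : ‖B‖ ≤ V := by linarith [norm_sub_norm_le B A, norm_sub_rev A B]
  have hgeom : ‖∑ i ∈ range m, A ^ i * B ^ (m - 1 - i)‖
      ≤ ∑ i ∈ range m, ‖A‖ ^ i * ‖B‖ ^ (m - 1 - i) :=
    (norm_sum_le _ _).trans_eq (by simp only [norm_mul, norm_pow])
  have hsplit : A ^ m - B ^ m / 2
      = A ^ m / 2 + (∑ i ∈ range m, A ^ i * B ^ (m - 1 - i)) * (A - B) / 2 := by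
    rw [geom_sum₂_mul]; ring
  calc ‖A ^ m - B ^ m / 2‖
      ≤ ‖A‖ ^ m / 2 + ‖A - B‖ * (∑ i ∈ range m, ‖A‖ ^ i * ‖B‖ ^ (m - 1 - i)) / 2 := by
        rw [hsplit]
        refine (norm_add_le _ _).trans ?_
        simp only [norm_div, norm_mul, norm_pow, Complex.norm_two]
        linarith [mul_le_mul_of_nonneg_left hgeom (norm_nonneg (A - B))]
    _ ≤ V ^ m - ‖B‖ ^ m / 2 :=
        pow_div_two_add_mul_geom_sum_le (norm_nonneg _) (norm_nonneg _) haV hbV h m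

theorem Rlam_swap (m : ℕ) (lam : ℝ) (p q : ℂ × ℂ) :
    Rlam m lam (q, p) = starRingEnd ℂ (Rlam m lam (p, q)) := by
  simp only [Rlam, map_sub, map_pow, map_add, map_mul, Complex.conj_conj, Complex.conj_ofReal]
  ring

theorem Rlam_eq_add_rankOne (m : ℕ) (lam : ℝ) :
    Rlam m lam = fun p => Rlam m (4 ^ m / 2) p
      + ((4 ^ m / 2 - lam : ℝ) : ℂ)
        * ((p.1.1 * p.1.2) ^ m * starRingEnd ℂ ((p.2.1 * p.2.2) ^ m)) := by
  funext p
  simp only [Rlam, map_pow, map_mul]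
  push_cast
  ring

theorem Rlam_crit_apply (m : ℕ) (p q : ℂ × ℂ) :
    Rlam m (4 ^ m / 2) (p, q)
      = ((p.1 * starRingEnd ℂ q.1 + p.2 * starRingEnd ℂ q.2) ^ 2) ^ m
        - (4 * (p.1 * starRingEnd ℂ q.1) * (p.2 * starRingEnd ℂ q.2)) ^ m / 2 := by
  simp only [Rlam, ← pow_mul, mul_pow]
  push_cast
  ring

theorem Rlam_crit_self (m : ℕ) (p : ℂ × ℂ) :
    Rlam m (4 ^ m / 2) (p, p) = critProfile m (‖p.1‖ ^ 2) (‖p.2‖ ^ 2) := by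
  rw [Rlam_crit_apply, Complex.mul_conj', Complex.mul_conj', critProfile]
  push_cast
  ring

theorem norm_Rlam_crit_le (m : ℕ) (p q : ℂ × ℂ) :
    ‖Rlam m (4 ^ m / 2) (p, q)‖ ≤ critProfile m (‖p.1‖ * ‖q.1‖) (‖p.2‖ * ‖q.2‖) := by
  set u := p.1 * starRingEnd ℂ q.1
  set v := p.2 * starRingEnd ℂ q.2
  have hu : ‖u‖ = ‖p.1‖ * ‖q.1‖ := by rw [norm_mul, Complex.norm_conj]
  have hv : ‖v‖ = ‖p.2‖ * ‖q.2‖ := by rw [norm_mul, Complex.norm_conj]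
  have hB : ‖4 * u * v‖ = 4 * ‖u‖ * ‖v‖ := by rw [norm_mul, norm_mul]; norm_num
  have hpar := parallelogram_law_with_norm ℂ u v
  rw [Rlam_crit_apply, critProfile, ← hu, ← hv, ← hB]
  refine norm_pow_sub_pow_div_two_le _ _ ?_ m
  rw [show (u + v) ^ 2 - 4 * u * v = (u - v) ^ 2 by ring, norm_pow, norm_pow, hB]
  nlinarith

theorem inP_two_Rlam_crit {m : ℕ} (hm : 0 < m) : InP 2 (Rlam m (4 ^ m / 2)) := by
  refine inP_two_of_sq_norm_le (Rlam_swap m _) (fun p => ?_) (fun p q => ?_)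
  · rw [Rlam_crit_self, Complex.ofReal_re]
    exact critProfile.nonneg hm (sq_nonneg _) (sq_nonneg _)
  · rw [Rlam_crit_self, Rlam_crit_self, Complex.ofReal_re, Complex.ofReal_re]
    calc ‖Rlam m (4 ^ m / 2) (p, q)‖ ^ 2
        ≤ critProfile m (‖p.1‖ * ‖q.1‖) (‖p.2‖ * ‖q.2‖) ^ 2 := by
          gcongr
          exact norm_Rlam_crit_le m p q
      _ ≤ _ := critProfile.sq_mul_mul_le hm (norm_nonneg _) (norm_nonneg _) (norm_nonneg _)
          (norm_nonneg _)

theorem le_of_inP_two_Rlam {m : ℕ} (hm : 0 < m) {lam : ℝ} (h : InP 2 (Rlam m lam)) :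
    lam ≤ 4 ^ m / 2 := by
  have hsign : ((-1 : ℂ) ^ m) ^ 2 = 1 := by rw [← pow_mul, pow_mul', neg_one_sq, one_pow]
  have hval : ∑ i, ∑ j, Rlam m lam (![(1, 1), (1, -1)] i, ![(1, 1), (1, -1)] j)
      * ![1, (-1) ^ m] i * starRingEnd ℂ (![1, (-1) ^ m] j) = ((2 * 4 ^ m - 4 * lam : ℝ) : ℂ) := by
    simp only [Rlam, Fin.sum_univ_two, Matrix.cons_val_zero, Matrix.cons_val_one, map_one, map_neg,
      map_pow, mul_one, mul_neg, add_neg_cancel, pow_mul, zero_pow two_ne_zero, zero_pow hm.ne']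
    push_cast
    linear_combination ((4 : ℂ) ^ m - 3 * lam) * hsign
  have hform := h ![(1, 1), (1, -1)] ![1, (-1) ^ m]
  rw [hval, Complex.zero_le_real] at hform
  linarith

/-- Theorem 3, part 2: `R_λ ∈ 𝒫_2(ℂ²)` iff `λ ≤ 2^{2m−1}`. -/
theorem stmt15 (m : ℕ) (hm : 0 < m) (lam : ℝ) :
    InP 2 (Rlam m lam) ↔ lam ≤ 2 ^ (2 * m - 1) := by
  have hcrit : (2 : ℝ) ^ (2 * m - 1) = 4 ^ m / 2 := by
    rw [eq_div_iff two_ne_zero, ← pow_succ, Nat.sub_add_cancel (by omega), pow_mul]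
    norm_num
  rw [hcrit]
  refine ⟨le_of_inP_two_Rlam hm, fun h => ?_⟩
  rw [Rlam_eq_add_rankOne m lam]
  exact (inP_two_Rlam_crit hm).add
    (inP_ofReal_mul_rankOne 2 (sub_nonneg.2 h) fun z : ℂ × ℂ => (z.1 * z.2) ^ m)
end

section
/- Let m be a positive integer and λ ∈ ℝ, and define R_λ : ℂ² × ℂ² → ℂ by R_λ(z,w) = (z₁·conj(w₁) + z₂·conj(w₂))^{2m} − λ·(z₁·z₂·conj(w₁)·conj(w₂))^m. Then R_λ ∈ 𝒫_N(ℂ²) for every positive integer N if and only if λ ≤ binom(2m, m), the central binomial coefficient. -/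
open scoped ComplexOrder

/-- Pointwise expansion of `R_λ` as a sum of rank-one hermitian terms. -/
lemma Rlam_expand (m : ℕ) (lam : ℝ) (z w : ℂ × ℂ) :
    Rlam m lam (z, w) = ∑ k ∈ Finset.range (2*m+1),
      (((2*m).choose k : ℂ) - if k = m then (lam:ℂ) else 0) *
      ((z.1^k * z.2^(2*m-k)) * (starRingEnd ℂ) (w.1^k * w.2^(2*m-k))) := by
  simp only [Rlam, sub_mul, Finset.sum_sub_distrib, ite_mul, zero_mul,
    Finset.sum_ite_eq' (Finset.range (2*m+1)) m]
  have hmem : m ∈ Finset.range (2*m+1) := by simp; omega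
  rw [if_pos hmem, add_pow]
  congr 1
  · apply Finset.sum_congr rfl
    intro k hk
    simp only [map_mul, map_pow, mul_pow]
    ring
  · have h2 : 2*m - m = m := by omega
    simp only [map_mul, map_pow, h2, mul_pow]
    ring

/-- The double sum factorizes through the coefficient functions. -/
lemma Rlam_double_sum (m : ℕ) (lam : ℝ) (N : ℕ) (z : Fin N → ℂ × ℂ) (a : Fin N → ℂ) :
    ∑ i, ∑ j, Rlam m lam (z i, z j) * a i * (starRingEnd ℂ) (a j)
    = ∑ k ∈ Finset.range (2*m+1),
        (((2*m).choose k : ℂ) - if k = m then (lam:ℂ) else 0) *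
        ((∑ i, (z i).1^k * (z i).2^(2*m-k) * a i) *
         (starRingEnd ℂ) (∑ i, (z i).1^k * (z i).2^(2*m-k) * a i)) := by
  have : ∀ k ∈ Finset.range (2*m+1),
      (((2*m).choose k : ℂ) - if k = m then (lam:ℂ) else 0) *
        ((∑ i, (z i).1^k * (z i).2^(2*m-k) * a i) *
         (starRingEnd ℂ) (∑ i, (z i).1^k * (z i).2^(2*m-k) * a i))
      = ∑ i, ∑ j, (((2*m).choose k : ℂ) - if k = m then (lam:ℂ) else 0) *
          (((z i).1^k * (z i).2^(2*m-k)) * (starRingEnd ℂ) ((z j).1^k * (z j).2^(2*m-k)))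
          * a i * (starRingEnd ℂ) (a j) := by
    intro k _
    rw [map_sum, Finset.sum_mul_sum, Finset.mul_sum]
    apply Finset.sum_congr rfl; intro i _
    rw [Finset.mul_sum]
    apply Finset.sum_congr rfl; intro j _
    simp only [map_mul]
    ring
  rw [Finset.sum_congr rfl this]
  conv_rhs => rw [Finset.sum_comm]
  apply Finset.sum_congr rfl; intro i _
  conv_rhs => rw [Finset.sum_comm]
  apply Finset.sum_congr rfl; intro j _
  rw [Rlam_expand, Finset.sum_mul, Finset.sum_mul]

/-- Theorem 3, part 3: `R_λ ∈ 𝒫_N(ℂ²)` for every positive integer `N` iff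
`λ ≤ binom(2m, m)`, the central binomial coefficient. -/
theorem stmt16 (m : ℕ) (hm : 0 < m) (lam : ℝ) :
    (∀ N : ℕ, 0 < N → InP N (Rlam m lam)) ↔ lam ≤ (Nat.choose (2 * m) m : ℝ) := by
  constructor
  · -- Necessity: test with roots of unity.
    intro hP
    have H := hP (2*m+1) (by omega)
    set N := 2*m+1 with hN
    have hN0 : N ≠ 0 := by omega
    set ω : ℂ := Complex.exp (2 * Real.pi * Complex.I / N) with hω
    have hprim : IsPrimitiveRoot ω N := Complex.isPrimitiveRoot_exp N hN0
    set z : Fin N → ℂ × ℂ := fun i => (1, ω ^ (i:ℕ)) with hz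
    set a : Fin N → ℂ := fun i => ω ^ ((i:ℕ) * (m+1)) with ha
    have hS : ∀ k ∈ Finset.range (2*m+1),
        (∑ i, (z i).1^k * (z i).2^(2*m-k) * a i) = if k = m then (N:ℂ) else 0 := by
      intro k hk
      have hk' : k ≤ 2*m := by simpa [Nat.lt_succ_iff] using Finset.mem_range.mp hk
      have hterm : ∀ i : Fin N, (z i).1^k * (z i).2^(2*m-k) * a i
          = (ω ^ (3*m+1-k)) ^ (i:ℕ) := by
        intro i
        simp only [hz, ha, one_pow, one_mul, ← pow_mul, ← pow_add]
        congr 1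
        rw [← Nat.mul_add, Nat.mul_comm]
        congr 1
        omega
      rw [Finset.sum_congr rfl (fun i _ => hterm i)]
      rw [Fin.sum_univ_eq_sum_range (fun i => (ω ^ (3*m+1-k)) ^ i) N]
      rcases eq_or_ne k m with hkm | hkm
      · rw [if_pos hkm, hkm]
        have h3 : 3*m+1-m = N := by omega
        rw [h3, hprim.pow_eq_one]
        simp
      · have hne : ω ^ (3*m+1-k) ≠ 1 := by
          intro h1
          rw [hprim.pow_eq_one_iff_dvd] at h1
          rcases h1 with ⟨c, hc⟩
          rw [hN] at hc
          have hc2 : c < 2 := by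
            by_contra hcge
            push_neg at hcge
            have h2 := Nat.mul_le_mul_left (2*m+1) hcge
            omega
          interval_cases c <;> omega
        rw [if_neg hkm, geom_sum_eq hne]
        have : (ω ^ (3*m+1-k)) ^ N = 1 := by
          rw [← pow_mul, mul_comm, pow_mul, hprim.pow_eq_one, one_pow]
        rw [this, sub_self, zero_div]
    have h0 := H z a
    rw [Rlam_double_sum m lam N z a] at h0
    rw [Finset.sum_congr rfl (fun k hk => by rw [hS k hk])] at h0
    rw [Finset.sum_eq_single m] at h0
    · simp only [eq_self_iff_true, if_true, map_natCast] at h0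
      have h0' : (0:ℝ) ≤ (((2*m).choose m : ℝ) - lam) * ((N:ℝ)*(N:ℝ)) := by
        rw [← Complex.zero_le_real, Complex.ofReal_mul, Complex.ofReal_mul,
          Complex.ofReal_sub, Complex.ofReal_natCast, Complex.ofReal_natCast]
        exact h0
      have hNpos : (0:ℝ) < (N:ℝ)*(N:ℝ) := by positivity
      nlinarith
    · intro k hk hkm
      simp [if_neg hkm]
    · intro h; exact absurd (by simp; omega : m ∈ Finset.range (2*m+1)) h
  · -- Sufficiency: the kernel is a nonneg combination of rank-one hermitian terms.
    intro hle N _ z a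
    rw [Rlam_double_sum m lam N z a]
    apply Finset.sum_nonneg
    intro k hk
    apply mul_nonneg
    · rcases eq_or_ne k m with hkm | hkm
      · rw [if_pos hkm, hkm, ← Complex.ofReal_natCast, ← Complex.ofReal_sub,
          Complex.zero_le_real]
        linarith
      · rw [if_neg hkm, sub_zero, ← Complex.ofReal_natCast, Complex.zero_le_real]
        positivity
    · rw [Complex.mul_conj, Complex.zero_le_real]
      exact Complex.normSq_nonneg _
end

section
/- Let m be a positive integer and λ ∈ ℝ, and define R_λ : ℂ² × ℂ² → ℂ by R_λ(z,w) = (z₁·conj(w₁) + z₂·conj(w₂))^{2m} − λ·(z₁·z₂·conj(w₁)·conj(w₂))^m. Then for every integer k ≥ m+1, R_λ ∈ 𝒫_k(ℂ²) if and only if λ ≤ binom(2m, m), the central binomial coefficient; in particular, for k ≥ m+1 membership in 𝒫_k(ℂ²) is equivalent to membership in 𝒫_N(ℂ²) for all N. -/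
open scoped ComplexOrder

open Finset in
lemma key (m N : ℕ) (lam : ℝ) (z : Fin N → ℂ × ℂ) (a : Fin N → ℂ) :
    ∑ i, ∑ j, (Rlam m lam (z i, z j) * a i * (starRingEnd ℂ) (a j))
      = (∑ t ∈ Finset.range (2*m+1), (Nat.choose (2*m) t : ℂ) *
          ((∑ i, (z i).1 ^ t * (z i).2 ^ (2*m - t) * a i) *
           (starRingEnd ℂ) (∑ i, (z i).1 ^ t * (z i).2 ^ (2*m - t) * a i)))
        - (lam : ℂ) * ((∑ i, (z i).1 ^ m * (z i).2 ^ m * a i) *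
           (starRingEnd ℂ) (∑ i, (z i).1 ^ m * (z i).2 ^ m * a i)) := by
  simp only [Rlam]
  set f : ℕ → Fin N → ℂ := fun t i => (z i).1 ^ t * (z i).2 ^ (2*m - t) * a i with hf
  have h1 : ∀ i j : Fin N,
      (((z i).1 * (starRingEnd ℂ) (z j).1 + (z i).2 * (starRingEnd ℂ) (z j).2) ^ (2*m)
      - (lam : ℂ) * ((z i).1 * (z i).2 * (starRingEnd ℂ) (z j).1 * (starRingEnd ℂ) (z j).2) ^ m)
      * a i * (starRingEnd ℂ) (a j)
      = (∑ t ∈ Finset.range (2*m+1), (Nat.choose (2*m) t : ℂ) * (f t i * (starRingEnd ℂ) (f t j)))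
        - (lam : ℂ) * (f m i * (starRingEnd ℂ) (f m j)) := by
    intro i j
    rw [add_pow, sub_mul, sub_mul, Finset.sum_mul, Finset.sum_mul]
    have h2m : 2*m - m = m := by omega
    congr 1
    · refine Finset.sum_congr rfl fun t ht => ?_
      simp only [hf, map_mul, map_pow, mul_pow]
      ring
    · simp only [hf, h2m, map_mul, map_pow]
      ring
  calc ∑ i, ∑ j, ((( (z i).1 * (starRingEnd ℂ) (z j).1 + (z i).2 * (starRingEnd ℂ) (z j).2) ^ (2*m)
      - (lam : ℂ) * ((z i).1 * (z i).2 * (starRingEnd ℂ) (z j).1 * (starRingEnd ℂ) (z j).2) ^ m)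
      * a i * (starRingEnd ℂ) (a j))
      = ∑ i, ∑ j, ((∑ t ∈ Finset.range (2*m+1), (Nat.choose (2*m) t : ℂ) * (f t i * (starRingEnd ℂ) (f t j)))
        - (lam : ℂ) * (f m i * (starRingEnd ℂ) (f m j))) :=
        Finset.sum_congr rfl fun i _ => Finset.sum_congr rfl fun j _ => h1 i j
    _ = (∑ i, ∑ j, ∑ t ∈ Finset.range (2*m+1), (Nat.choose (2*m) t : ℂ) * (f t i * (starRingEnd ℂ) (f t j)))
        - ∑ i, ∑ j, (lam : ℂ) * (f m i * (starRingEnd ℂ) (f m j)) := by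
        rw [← Finset.sum_sub_distrib]
        exact Finset.sum_congr rfl fun i _ => by rw [← Finset.sum_sub_distrib]
    _ = _ := by
        congr 1
        · calc ∑ i, ∑ j, ∑ t ∈ Finset.range (2*m+1), (Nat.choose (2*m) t : ℂ) * (f t i * (starRingEnd ℂ) (f t j))
            = ∑ i, ∑ t ∈ Finset.range (2*m+1), ∑ j, (Nat.choose (2*m) t : ℂ) * (f t i * (starRingEnd ℂ) (f t j)) :=
              Finset.sum_congr rfl fun i _ => Finset.sum_comm
          _ = ∑ t ∈ Finset.range (2*m+1), ∑ i, ∑ j, (Nat.choose (2*m) t : ℂ) * (f t i * (starRingEnd ℂ) (f t j)) :=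
              Finset.sum_comm
          _ = _ := by
              refine Finset.sum_congr rfl fun t _ => ?_
              rw [map_sum, Finset.sum_mul_sum, Finset.mul_sum]
              exact Finset.sum_congr rfl fun i _ => by rw [Finset.mul_sum]
        · have e : (fun i => (z i).1 ^ m * (z i).2 ^ m * a i) = f m := by
            funext i; simp [hf, show 2*m-m = m from by omega]
          rw [← e] at *
          rw [map_sum, Finset.sum_mul_sum, Finset.mul_sum]
          exact Finset.sum_congr rfl fun i _ => by rw [Finset.mul_sum]

lemma suff (m : ℕ) (lam : ℝ) (h : lam ≤ (Nat.choose (2*m) m : ℝ)) (N : ℕ) :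
    InP N (Rlam m lam) := by
  intro z a
  rw [key]
  set S : ℕ → ℂ := fun t => ∑ i, (z i).1 ^ t * (z i).2 ^ (2*m - t) * a i with hS
  have hconj : ∀ t, S t * (starRingEnd ℂ) (S t) = ((Complex.normSq (S t) : ℝ) : ℂ) := by
    intro t; rw [mul_comm, Complex.normSq_eq_conj_mul_self]
  have h2m : 2*m - m = m := by omega
  have hSm : (∑ i, (z i).1 ^ m * (z i).2 ^ m * a i) = S m := by
    simp [hS, h2m]
  rw [hSm]
  have he : (∑ t ∈ Finset.range (2*m+1), (Nat.choose (2*m) t : ℂ) * (S t * (starRingEnd ℂ) (S t)))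
        - (lam : ℂ) * (S m * (starRingEnd ℂ) (S m))
      = (((∑ t ∈ Finset.range (2*m+1), (Nat.choose (2*m) t : ℝ) * Complex.normSq (S t))
          - lam * Complex.normSq (S m) : ℝ) : ℂ) := by
    simp only [hconj]
    push_cast
    ring
  rw [he, Complex.zero_le_real]
  have hm_mem : m ∈ Finset.range (2*m+1) := by simp; omega
  have h1 : ((Nat.choose (2*m) m : ℝ)) * Complex.normSq (S m)
      ≤ ∑ t ∈ Finset.range (2*m+1), (Nat.choose (2*m) t : ℝ) * Complex.normSq (S t) :=
    Finset.single_le_sum (f := fun t => (Nat.choose (2*m) t : ℝ) * Complex.normSq (S t))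
      (fun t _ => mul_nonneg (Nat.cast_nonneg _) (Complex.normSq_nonneg _)) hm_mem
  have h2 : lam * Complex.normSq (S m) ≤ ((Nat.choose (2*m) m : ℝ)) * Complex.normSq (S m) :=
    mul_le_mul_of_nonneg_right h (Complex.normSq_nonneg _)
  linarith

lemma nec (m : ℕ) (lam : ℝ) (k : ℕ) (hk : m + 1 ≤ k) (h : InP k (Rlam m lam)) :
    lam ≤ (Nat.choose (2*m) m : ℝ) := by
  set ζ : ℂ := Complex.exp (2 * Real.pi * Complex.I / ((m+1 : ℕ) : ℂ)) with hζ
  have hprim : IsPrimitiveRoot ζ (m+1) := by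
    rw [hζ]; exact Complex.isPrimitiveRoot_exp (m+1) (Nat.succ_ne_zero m)
  set z : Fin k → ℂ × ℂ := fun i => (ζ ^ (i : ℕ), 1) with hz
  set a : Fin k → ℂ := fun i => if (i : ℕ) < m + 1 then ζ ^ (i : ℕ) else 0 with ha
  have hgeom : ∀ t, (∑ i : Fin k, (z i).1 ^ t * (z i).2 ^ (2*m - t) * a i)
      = ∑ i ∈ Finset.range (m+1), (ζ ^ (t+1)) ^ i := by
    intro t
    have : ∀ i : ℕ, (ζ ^ i) ^ t * (1:ℂ) ^ (2*m - t) * (if i < m + 1 then ζ ^ i else 0)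
        = if i < m + 1 then (ζ ^ (t+1)) ^ i else 0 := by
      intro i
      by_cases hi : i < m + 1 <;> simp [hi, ← pow_mul, ← pow_add]
      ring_nf
    calc (∑ i : Fin k, (z i).1 ^ t * (z i).2 ^ (2*m - t) * a i)
        = ∑ i ∈ Finset.range k, (if i < m + 1 then (ζ ^ (t+1)) ^ i else 0) := by
          rw [← Fin.sum_univ_eq_sum_range (fun i => if i < m + 1 then (ζ ^ (t+1)) ^ i else 0) k]
          exact Finset.sum_congr rfl fun i _ => this i
      _ = ∑ i ∈ Finset.range (m+1), (if i < m + 1 then (ζ ^ (t+1)) ^ i else 0) :=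
          (Finset.sum_subset (Finset.range_subset_range.2 hk)
            (fun x _ hx => by
              simp only [Finset.mem_range, not_lt] at hx
              rw [if_neg (by omega)])).symm
      _ = ∑ i ∈ Finset.range (m+1), (ζ ^ (t+1)) ^ i :=
          Finset.sum_congr rfl fun i hi => by simp at hi; simp [hi]
  have hSm : (∑ i : Fin k, (z i).1 ^ m * (z i).2 ^ (2*m - m) * a i) = ((m:ℂ) + 1) := by
    rw [hgeom m, hprim.pow_eq_one]
    simp
  have hS0 : ∀ t, t ∈ Finset.range (2*m+1) → t ≠ m →
      (∑ i : Fin k, (z i).1 ^ t * (z i).2 ^ (2*m - t) * a i) = 0 := by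
    intro t ht htm
    rw [hgeom t]
    have hne : ζ ^ (t+1) ≠ 1 := by
      intro h1
      rw [hprim.pow_eq_one_iff_dvd] at h1
      revert h1
      simp at ht
      rintro ⟨c, hc⟩
      rcases Nat.lt_or_ge c 2 with h2 | h2
      · interval_cases c <;> omega
      · have : (m+1)*2 ≤ (m+1)*c := Nat.mul_le_mul_left _ h2
        omega
    rw [geom_sum_eq hne]
    have : (ζ ^ (t+1)) ^ (m+1) = 1 := by
      rw [← pow_mul, mul_comm, pow_mul, hprim.pow_eq_one, one_pow]
    rw [this, sub_self, zero_div]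
  have hSm' : (∑ i : Fin k, (z i).1 ^ m * (z i).2 ^ m * a i) = ((m:ℂ) + 1) := by
    rw [← hSm]
    exact Finset.sum_congr rfl fun i _ => by simp [hz]
  have hineq := h z a
  rw [key] at hineq
  rw [Finset.sum_eq_single_of_mem m (Finset.mem_range.2 (by omega))
      (fun t ht htm => by rw [hS0 t ht htm]; simp)] at hineq
  rw [hSm, hSm'] at hineq
  have hconj : (starRingEnd ℂ) ((m:ℂ) + 1) = (m:ℂ) + 1 := by
    simp
  rw [hconj] at hineq
  have he : ((Nat.choose (2*m) m : ℂ)) * (((m:ℂ)+1) * ((m:ℂ)+1)) - (lam:ℂ) * (((m:ℂ)+1) * ((m:ℂ)+1))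
      = ((((Nat.choose (2*m) m : ℝ) - lam) * ((m:ℝ)+1)^2 : ℝ) : ℂ) := by
    push_cast; ring
  rw [he, Complex.zero_le_real] at hineq
  nlinarith [sq_nonneg ((m:ℝ)+1), pow_pos (show (0:ℝ) < (m:ℝ)+1 by positivity) 2]


/-- Theorem 3, part 4 / Proposition 4 (stability): for every integer `k ≥ m + 1`,
`R_λ ∈ 𝒫_k(ℂ²)` iff `λ ≤ binom(2m, m)`; in particular, for such `k`, membership in
`𝒫_k(ℂ²)` is equivalent to membership in `𝒫_N(ℂ²)` for all positive integers `N`. -/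
theorem stmt17 (m : ℕ) (hm : 0 < m) (lam : ℝ) (k : ℕ) (hk : m + 1 ≤ k) :
    (InP k (Rlam m lam) ↔ lam ≤ (Nat.choose (2 * m) m : ℝ)) ∧
      (InP k (Rlam m lam) ↔ ∀ N : ℕ, 0 < N → InP N (Rlam m lam)) := by

  constructor
  · exact ⟨fun h => nec m lam k hk h, fun h => suff m lam h k⟩
  · exact ⟨fun h N _ => suff m lam (nec m lam k hk h) N, fun h => h k (by omega)⟩
end
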